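/- arXiv:1607.04888 — 7 statements merged into one kernel-verified Lean document; each statement's English description precedes it below -/
import Mathlib

section
/- Let A be a finite nonempty subset of an abelian group, let K be a real number with |A+A| = K·|A|, and let λ₁, …, λ_h be nonzero integers. Then |λ₁·A + λ₂·A + … + λ_h·A| ≤ K^(7 + 12·Σᵢ log₂(1+|λᵢ|)) · |A|. -/
open Pointwise

/-- The dilate `λ · A = {λa : a ∈ A}` of a finite set in an abelian group. -/
def dilate {G : Type} [AddCommGroup G] [DecidableEq G] (l : ℤ) (A : Finset G) : Finset G :=
  A.image fun a => l • a

namespace BukhAux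

open Finset Real

variable {G : Type} [AddCommGroup G] [DecidableEq G]

lemma mem_dilate {l : ℤ} {A : Finset G} {x : G} : x ∈ dilate l A ↔ ∃ a ∈ A, l • a = x := by
  simp [dilate]

lemma smul_mem_dilate {l : ℤ} {A : Finset G} {a : G} (ha : a ∈ A) : l • a ∈ dilate l A :=
  Finset.mem_image_of_mem _ ha

lemma card_dilate_le (l : ℤ) (A : Finset G) : (dilate l A).card ≤ A.card :=
  Finset.card_image_le

lemma dilate_one (A : Finset G) : dilate 1 A = A := by
  simp [dilate]

lemma dilate_natAbs (A : Finset G) (l : ℤ) :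
    dilate l (A - A) = dilate (l.natAbs) (A - A) := by
  have hneg : ∀ x : G, x ∈ A - A → -x ∈ A - A := by
    intro x hx
    obtain ⟨p, hp, q, hq, rfl⟩ := Finset.mem_sub.1 hx
    exact Finset.mem_sub.2 ⟨q, hq, p, hp, (neg_sub p q).symm⟩
  rcases Int.natAbs_eq l with hl | hl
  · rw [← hl]
  · have h1 : ∀ d : G, (l.natAbs : ℤ) • (-d) = l • d := by
      intro d
      rw [smul_neg, ← neg_smul, ← hl]
    ext x
    simp only [mem_dilate]
    constructor
    · rintro ⟨d, hd, rfl⟩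
      exact ⟨-d, hneg d hd, h1 d⟩
    · rintro ⟨d, hd, rfl⟩
      refine ⟨-d, hneg d hd, ?_⟩
      rw [← h1 (-d), neg_neg]

/-- Numeric helper: if `2^a ≤ x^12` then `a ≤ 12 logb 2 x`. -/
lemma nat_le_logb (a : ℕ) (x : ℝ) (hx : 0 < x) (h : (2:ℝ) ^ a ≤ x ^ 12) :
    (a : ℝ) ≤ 12 * Real.logb 2 x := by
  have h2 : Real.logb 2 ((2:ℝ) ^ a) ≤ Real.logb 2 (x ^ 12) :=
    Real.logb_le_logb_of_le (by norm_num) (by positivity) h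
  rw [Real.logb_pow, Real.logb_pow, Real.logb_self_eq_one (by norm_num)] at h2
  push_cast at h2
  linarith

lemma exp_le (l : ℕ) (hl : 1 ≤ l) :
    (10 * (Nat.log 2 l : ℝ) + 6) ≤ 12 * Real.logb 2 (1 + (l : ℝ)) := by
  have hl1 : (1:ℝ) ≤ (l:ℝ) := by exact_mod_cast hl
  have hx0 : (0:ℝ) < 1 + (l:ℝ) := by linarith
  have hml : 2 ^ Nat.log 2 l ≤ l := Nat.pow_log_le_self 2 (by omega)
  have hxl : ((2:ℝ)) ^ Nat.log 2 l ≤ 1 + (l : ℝ) := by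
    have : ((2 ^ Nat.log 2 l : ℕ) : ℝ) ≤ (l : ℝ) := by exact_mod_cast hml
    push_cast at this
    linarith
  by_cases hm3 : 3 ≤ Nat.log 2 l
  · have h1 : (Nat.log 2 l : ℝ) ≤ Real.logb 2 (1 + (l:ℝ)) := by
      have h2 : Real.logb 2 ((2:ℝ) ^ Nat.log 2 l) ≤ Real.logb 2 (1 + (l:ℝ)) :=
        Real.logb_le_logb_of_le (by norm_num) (by positivity) hxl
      rwa [Real.logb_pow, Real.logb_self_eq_one (by norm_num), mul_one] at h2
    have h3 : (3:ℝ) ≤ (Nat.log 2 l : ℝ) := by exact_mod_cast hm3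
    linarith
  · push_neg at hm3
    interval_cases hm : Nat.log 2 l
    · -- log = 0 : 6 ≤ 12 logb 2 (1+l), with 1+l ≥ 2
      have h6 : ((6:ℕ) : ℝ) ≤ 12 * Real.logb 2 (1 + (l:ℝ)) := by
        apply nat_le_logb _ _ hx0
        calc (2:ℝ) ^ (6:ℕ) ≤ 2 ^ (12:ℕ) := by norm_num
          _ ≤ (1 + (l:ℝ)) ^ 12 := by gcongr; linarith
      push_cast at h6 ⊢
      linarith
    · -- log = 1 : l ≥ 2, 1+l ≥ 3, 16 ≤ 12 logb
      have h3 : (3:ℝ) ≤ 1 + (l:ℝ) := by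
        have : (2:ℕ) ≤ l := by simpa using hml
        have : (2:ℝ) ≤ (l:ℝ) := by exact_mod_cast this
        linarith
      have h6 : ((16:ℕ) : ℝ) ≤ 12 * Real.logb 2 (1 + (l:ℝ)) := by
        apply nat_le_logb _ _ hx0
        calc (2:ℝ) ^ (16:ℕ) ≤ 3 ^ (12:ℕ) := by norm_num
          _ ≤ (1 + (l:ℝ)) ^ 12 := by gcongr
      push_cast at h6 ⊢
      linarith
    · -- log = 2 : l ≥ 4, 1+l ≥ 5, 26 ≤ 12 logb
      have h3 : (5:ℝ) ≤ 1 + (l:ℝ) := by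
        have : (4:ℕ) ≤ l := by simpa using hml
        have : (4:ℝ) ≤ (l:ℝ) := by exact_mod_cast this
        linarith
      have h6 : ((26:ℕ) : ℝ) ≤ 12 * Real.logb 2 (1 + (l:ℝ)) := by
        apply nat_le_logb _ _ hx0
        calc (2:ℝ) ^ (26:ℕ) ≤ 5 ^ (12:ℕ) := by norm_num
          _ ≤ (1 + (l:ℝ)) ^ 12 := by gcongr
      push_cast at h6 ⊢
      linarith

/-- Core recursion: if `D + D ⊆ X + D` then `|D + D + l·D| ≤ |X|^(2 log₂ l) |D+D+D|`. -/
lemma core (D X : Finset G) (hXne : X.Nonempty) (hcov : D + D ⊆ X + D) :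
    ∀ l : ℕ, 1 ≤ l →
      (((D + D + dilate (l : ℤ) D).card : ℝ)) ≤
        ((X.card : ℝ)) ^ (2 * Nat.log 2 l) * ((D + D + D).card : ℝ) := by
  intro l
  induction l using Nat.strong_induction_on with
  | _ l IH =>
  intro hl
  obtain ⟨x₀, hx₀⟩ := hXne
  rcases eq_or_lt_of_le hl with h1 | h2
  · -- l = 1
    rw [← h1]
    simp [dilate_one]
  · -- l ≥ 2
    have hl2 : 2 ≤ l := h2
    set m := l / 2 with hmdef
    set r := l % 2 with hrdef
    have hm1 : 1 ≤ m := by omega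
    have hml : m < l := by omega
    have hlmr : (l : ℤ) = 2 * (m : ℤ) + (r : ℤ) := by
      have : l = 2 * m + r := by omega
      exact_mod_cast this
    have hr01 : r = 0 ∨ r = 1 := by omega
    -- containment
    have hsub : D + D + dilate (l : ℤ) D ⊆
        dilate (r : ℤ) X + dilate (m : ℤ) X + (D + D + dilate (m : ℤ) D) := by
      intro z hz
      obtain ⟨w, hw, u, hu, rfl⟩ := Finset.mem_add.1 hz
      obtain ⟨d, hd, rfl⟩ := mem_dilate.1 hu
      obtain ⟨d1, hd1, d2, hd2, rfl⟩ := Finset.mem_add.1 hw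
      have hdd : d + d ∈ X + D := hcov (Finset.add_mem_add hd hd)
      obtain ⟨x', hx', d', hd', hxd'⟩ := Finset.mem_add.1 hdd
      have hldec : (l : ℤ) • d = (m : ℤ) • x' + ((m : ℤ) • d' + (r : ℤ) • d) := by
        have h0 : (l : ℤ) • d = (m : ℤ) • (d + d) + (r : ℤ) • d := by
          rw [hlmr, add_smul, mul_smul, two_smul, smul_add]
        rw [h0, ← hxd', smul_add, add_assoc]
      rcases hr01 with hr | hr
      · -- even case
        refine Finset.mem_add.2
          ⟨(r : ℤ) • x₀ + (m : ℤ) • x',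
            Finset.add_mem_add (smul_mem_dilate hx₀) (smul_mem_dilate hx'),
            (d1 + d2) + (m : ℤ) • d',
            Finset.add_mem_add (Finset.add_mem_add hd1 hd2) (smul_mem_dilate hd'), ?_⟩
        rw [hldec, hr]
        push_cast
        simp only [zero_smul]
        abel
      · -- odd case: also cover d1 + d2
        have hdd2 : d1 + d2 ∈ X + D := hcov (Finset.add_mem_add hd1 hd2)
        obtain ⟨x'', hx'', d'', hd'', hxd''⟩ := Finset.mem_add.1 hdd2
        refine Finset.mem_add.2
          ⟨(r : ℤ) • x'' + (m : ℤ) • x',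
            Finset.add_mem_add (smul_mem_dilate hx'') (smul_mem_dilate hx'),
            (d'' + d) + (m : ℤ) • d',
            Finset.add_mem_add (Finset.add_mem_add hd'' hd) (smul_mem_dilate hd'), ?_⟩
        rw [hldec, hr, ← hxd'']
        push_cast
        simp only [one_smul]
        abel
    -- cardinalities
    have hcards : (D + D + dilate (l : ℤ) D).card ≤
        X.card * X.card * (D + D + dilate (m : ℤ) D).card := by
      calc (D + D + dilate (l : ℤ) D).card
          ≤ (dilate (r : ℤ) X + dilate (m : ℤ) X + (D + D + dilate (m : ℤ) D)).card :=
            Finset.card_le_card hsub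
        _ ≤ (dilate (r : ℤ) X + dilate (m : ℤ) X).card * (D + D + dilate (m : ℤ) D).card :=
            Finset.card_add_le
        _ ≤ ((dilate (r : ℤ) X).card * (dilate (m : ℤ) X).card) *
              (D + D + dilate (m : ℤ) D).card :=
            Nat.mul_le_mul_right _ Finset.card_add_le
        _ ≤ (X.card * X.card) * (D + D + dilate (m : ℤ) D).card := by
            exact Nat.mul_le_mul_right _
              (Nat.mul_le_mul (card_dilate_le _ _) (card_dilate_le _ _))
    have hXpos : (0:ℝ) ≤ (X.card : ℝ) := by positivity
    have hlog : 2 * Nat.log 2 l = 2 * Nat.log 2 m + 2 := by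
      have h1 : Nat.log 2 m = Nat.log 2 l - 1 := by
        rw [hmdef]; exact Nat.log_div_base 2 l
      have h2 : 0 < Nat.log 2 l := Nat.log_pos (by norm_num) (by omega)
      omega
    calc ((D + D + dilate (l : ℤ) D).card : ℝ)
        ≤ ((X.card : ℝ)) * (X.card : ℝ) * ((D + D + dilate (m : ℤ) D).card : ℝ) := by
          exact_mod_cast hcards
      _ ≤ ((X.card : ℝ)) * (X.card : ℝ) *
            (((X.card : ℝ)) ^ (2 * Nat.log 2 m) * ((D + D + D).card : ℝ)) := by
          have := IH m hml hm1
          gcongr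
      _ = ((X.card : ℝ)) ^ (2 * Nat.log 2 m + 2) * ((D + D + D).card : ℝ) := by
          rw [pow_add]
          ring
      _ = ((X.card : ℝ)) ^ (2 * Nat.log 2 l) * ((D + D + D).card : ℝ) := by
          rw [hlog]

/-- Ruzsa-triangle chaining over the index set. -/
lemma chain (D : Finset G) {h : ℕ} (lam : Fin h → ℤ) (s : Finset (Fin h)) :
    ((((∑ i ∈ s, dilate (lam i) D) + D).card : ℝ)) * ((D.card : ℝ)) ^ s.card ≤
      ((D.card : ℝ)) * ∏ i ∈ s, (((D + D + dilate (lam i) D).card : ℝ)) := by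
  induction s using Finset.induction_on with
  | empty => simp
  | @insert a s ha IH =>
    set U : Finset G := ∑ i ∈ s, dilate (lam i) D with hU
    have hsum : (∑ i ∈ insert a s, dilate (lam i) D) = dilate (lam a) D + U := by
      rw [Finset.sum_insert ha]
    have hset1 : (∑ i ∈ insert a s, dilate (lam i) D) + D
        = U + (dilate (lam a) D + D) := by
      rw [hsum]; ac_rfl
    have hset2 : D + (dilate (lam a) D + D) = D + D + dilate (lam a) D := by ac_rfl
    have tri := Finset.ruzsa_triangle_inequality_add_add_add U D (dilate (lam a) D + D)
    rw [hset2] at tri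
    have tri' : ((U + (dilate (lam a) D + D)).card : ℝ) * (D.card : ℝ) ≤
        ((U + D).card : ℝ) * ((D + D + dilate (lam a) D).card : ℝ) := by
      exact_mod_cast tri
    have hpos : (0:ℝ) ≤ ((D + D + dilate (lam a) D).card : ℝ) := by positivity
    calc (((∑ i ∈ insert a s, dilate (lam i) D) + D).card : ℝ) *
            ((D.card : ℝ)) ^ (insert a s).card
        = (((U + (dilate (lam a) D + D)).card : ℝ) * (D.card : ℝ)) *
            ((D.card : ℝ)) ^ s.card := by
          rw [hset1, Finset.card_insert_of_notMem ha, pow_succ]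
          ring
      _ ≤ (((U + D).card : ℝ) * ((D + D + dilate (lam a) D).card : ℝ)) *
            ((D.card : ℝ)) ^ s.card := by
          gcongr
      _ = (((U + D).card : ℝ) * ((D.card : ℝ)) ^ s.card) *
            ((D + D + dilate (lam a) D).card : ℝ) := by ring
      _ ≤ (((D.card : ℝ)) * ∏ i ∈ s, (((D + D + dilate (lam i) D).card : ℝ))) *
            ((D + D + dilate (lam a) D).card : ℝ) := by
          gcongr
      _ = ((D.card : ℝ)) * ∏ i ∈ insert a s, (((D + D + dilate (lam i) D).card : ℝ)) := by
          rw [Finset.prod_insert ha]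
          ring

/-- Each sum of dilates of `A` sits inside a translate of the sum of dilates of `D = A - A`. -/
lemma translate (A : Finset G) (a₀ : G) (ha₀ : a₀ ∈ A) {h : ℕ} (lam : Fin h → ℤ)
    (s : Finset (Fin h)) :
    (∑ i ∈ s, dilate (lam i) A) ⊆
      {∑ i ∈ s, (lam i) • a₀} + ∑ i ∈ s, dilate (lam i) (A - A) := by
  induction s using Finset.induction_on with
  | empty =>
    refine fun x hx => Finset.mem_add.2 ⟨0, by simp, x, by simpa using hx, zero_add x⟩
  | @insert a s ha IH =>
    rw [Finset.sum_insert ha, Finset.sum_insert ha, Finset.sum_insert ha]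
    intro z hz
    obtain ⟨u, hu, v, hv, rfl⟩ := Finset.mem_add.1 hz
    obtain ⟨b, hbA, rfl⟩ := mem_dilate.1 hu
    obtain ⟨c, hc, w, hw, hcw⟩ := Finset.mem_add.1 (IH hv)
    rw [Finset.mem_singleton] at hc
    refine Finset.mem_add.2
      ⟨lam a • a₀ + ∑ i ∈ s, lam i • a₀, Finset.mem_singleton_self _,
        lam a • (b - a₀) + w,
        Finset.add_mem_add (smul_mem_dilate (Finset.sub_mem_sub hbA ha₀)) hw, ?_⟩
    rw [smul_sub]
    rw [hc] at hcw
    rw [← hcw]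
    abel

end BukhAux

open BukhAux Finset

/-- Bukh's theorem: if `|A+A| = K|A|` and `λ₁, …, λ_h` are nonzero integers, then
`|λ₁·A + ⋯ + λ_h·A| ≤ K^(7 + 12 ∑ᵢ log₂(1+|λᵢ|)) |A|`. -/
theorem bukh_sum_of_dilates {G : Type} [AddCommGroup G] [DecidableEq G]
    (A : Finset G) (hA : A.Nonempty) (K : ℝ) (h : ℕ) (lam : Fin h → ℤ)
    (hlam : ∀ i, lam i ≠ 0)
    (hK : ((A + A).card : ℝ) = K * A.card) :
    ((∑ i, dilate (lam i) A).card : ℝ) ≤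
      K ^ ((7 : ℝ) + 12 * ∑ i, Real.logb 2 (1 + (|lam i| : ℤ))) * A.card := by
  classical
  obtain ⟨a₀, ha₀⟩ := hA
  have hA : A.Nonempty := ⟨a₀, ha₀⟩
  set D : Finset G := A - A with hD
  have hApos : (0:ℝ) < A.card := by exact_mod_cast hA.card_pos
  have hK1 : 1 ≤ K := by
    have h1 : (A.card : ℝ) ≤ ((A + A).card : ℝ) := by
      exact_mod_cast Finset.card_le_card_add_right hA
    rw [hK] at h1
    exact (le_mul_iff_one_le_left hApos).1 h1
  have hD0 : (0:G) ∈ D := Finset.mem_sub.2 ⟨a₀, ha₀, a₀, ha₀, sub_self a₀⟩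
  have hDne : D.Nonempty := ⟨0, hD0⟩
  have hADcard : (A.card : ℝ) ≤ (D.card : ℝ) := by
    have : A.card ≤ D.card := by
      apply Finset.card_le_card_of_injOn (fun a => a - a₀)
      · intro a ha
        exact Finset.mem_sub.2 ⟨a, ha, a₀, ha₀, rfl⟩
      · intro x _ y _ hxy
        rwa [sub_left_inj] at hxy
    exact_mod_cast this
  -- Plünnecke–Ruzsa in ℝ
  have plun : ∀ m n : ℕ, (((m • A - n • A).card : ℝ)) ≤ K ^ (m + n) * A.card := by
    intro m n
    have h0 := Finset.pluennecke_ruzsa_inequality_nsmul_sub_nsmul_add hA A m n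
    have h0' : (((m • A - n • A).card : ℝ)) ≤
        (((A + A).card : ℝ) / (A.card : ℝ)) ^ (m + n) * (A.card : ℝ) := by
      have := (NNRat.cast_le (K := ℝ)).2 h0
      push_cast at this
      exact this
    have hdiv : ((A + A).card : ℝ) / (A.card : ℝ) = K := by
      rw [hK]
      field_simp
    rwa [hdiv] at h0'
  have hDcard : (D.card : ℝ) ≤ K ^ 2 * A.card := by
    have := plun 1 1
    simpa [one_nsmul, ← hD] using this
  have h3A : (3 : ℕ) • A = A + A + A := by
    rw [show (3:ℕ) = 2 + 1 from rfl, add_nsmul, two_nsmul, one_nsmul]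
  have h2A : (2 : ℕ) • A = A + A := two_nsmul A
  have hDDD : ((D + D + D).card : ℝ) ≤ K ^ 6 * A.card := by
    have hid : (3:ℕ) • A - (3:ℕ) • A = D + D + D := by
      rw [h3A, hD]
      simp only [sub_eq_add_neg, neg_add]
      ac_rfl
    have := plun 3 3
    rw [hid] at this
    simpa using this
  have hDDA : ((D + D + A).card : ℝ) ≤ K ^ 5 * A.card := by
    have hid : (3:ℕ) • A - (2:ℕ) • A = D + D + A := by
      rw [h3A, h2A, hD]
      simp only [sub_eq_add_neg, neg_add]
      ac_rfl
    have := plun 3 2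
    rw [hid] at this
    simpa using this
  -- Ruzsa covering: D + D ⊆ X + D with |X| ≤ K^5
  obtain ⟨X, hXsub, hXcard, hXcov⟩ :=
    Finset.ruzsa_covering_add (A := D + D) (B := A) hA hDDA
  rw [← hD] at hXcov
  have hXne : X.Nonempty := by
    obtain ⟨d, hd⟩ : (D + D).Nonempty := hDne.add hDne
    obtain ⟨x, hx, -, -, -⟩ := Finset.mem_add.1 (hXcov hd)
    exact ⟨x, hx⟩
  -- bound each |D + D + λᵢ·D|
  set E : Fin h → ℕ := fun i => 10 * Nat.log 2 (lam i).natAbs + 6 with hE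
  have Fbound : ∀ i : Fin h,
      (((D + D + dilate (lam i) D).card : ℝ)) ≤ K ^ (E i) * A.card := by
    intro i
    have hna : 1 ≤ (lam i).natAbs := Int.natAbs_pos.2 (hlam i)
    have hrw : dilate (lam i) D = dilate ((lam i).natAbs : ℤ) D := by
      rw [hD]; exact dilate_natAbs A (lam i)
    have hc := core D X hXne hXcov (lam i).natAbs hna
    rw [hrw]
    set L := Nat.log 2 (lam i).natAbs with hL
    calc (((D + D + dilate ((lam i).natAbs : ℤ) D).card : ℝ))
        ≤ ((X.card : ℝ)) ^ (2 * L) * ((D + D + D).card : ℝ) := hc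
      _ ≤ (K ^ 5) ^ (2 * L) * (K ^ 6 * A.card) := by
          gcongr
      _ = K ^ (E i) * A.card := by
          have hEe : E i = 5 * (2 * L) + 6 := by
            simp only [hE, hL]
            ring
          rw [hEe, pow_add, ← pow_mul]
          ring
  -- chain everything
  have hch := chain D lam (Finset.univ : Finset (Fin h))
  have hDpos : (0:ℝ) < (D.card : ℝ) := by
    have := hDne.card_pos
    exact_mod_cast this
  have hprod : (∏ i : Fin h, (((D + D + dilate (lam i) D).card : ℝ))) ≤
      (∏ i : Fin h, (K ^ (E i))) * ((D.card : ℝ)) ^ (Finset.univ : Finset (Fin h)).card := by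
    have hsplit : (∏ i : Fin h, (K ^ (E i) * (D.card : ℝ))) =
        (∏ i : Fin h, (K ^ (E i))) * ((D.card : ℝ)) ^ (Finset.univ : Finset (Fin h)).card := by
      rw [Finset.prod_mul_distrib, Finset.prod_const]
    rw [← hsplit]
    apply Finset.prod_le_prod
    · intro i _; positivity
    · intro i _
      calc (((D + D + dilate (lam i) D).card : ℝ)) ≤ K ^ (E i) * A.card := Fbound i
        _ ≤ K ^ (E i) * D.card := by
            gcongr
  have hsumD : (((∑ i, dilate (lam i) D) + D).card : ℝ) ≤
      (D.card : ℝ) * ∏ i : Fin h, (K ^ (E i)) := by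
    have step : (((∑ i, dilate (lam i) D) + D).card : ℝ) *
        ((D.card : ℝ)) ^ (Finset.univ : Finset (Fin h)).card ≤
        ((D.card : ℝ) * ∏ i : Fin h, (K ^ (E i))) *
        ((D.card : ℝ)) ^ (Finset.univ : Finset (Fin h)).card := by
      calc (((∑ i, dilate (lam i) D) + D).card : ℝ) *
            ((D.card : ℝ)) ^ (Finset.univ : Finset (Fin h)).card
          ≤ (D.card : ℝ) * ∏ i : Fin h, (((D + D + dilate (lam i) D).card : ℝ)) := hch
        _ ≤ (D.card : ℝ) * ((∏ i : Fin h, (K ^ (E i))) *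
              ((D.card : ℝ)) ^ (Finset.univ : Finset (Fin h)).card) := by
            gcongr
        _ = ((D.card : ℝ) * ∏ i : Fin h, (K ^ (E i))) *
              ((D.card : ℝ)) ^ (Finset.univ : Finset (Fin h)).card := by ring
    exact le_of_mul_le_mul_right step (by positivity)
  -- translate: from A-dilates to D-dilates
  have hcard1 : ((∑ i, dilate (lam i) A).card : ℝ) ≤ ((∑ i, dilate (lam i) D).card : ℝ) := by
    have hsub := translate A a₀ ha₀ lam (Finset.univ : Finset (Fin h))
    rw [← hD] at hsub
    have := Finset.card_le_card hsub
    rw [Finset.card_singleton_add] at this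
    exact_mod_cast this
  have hcard2 : ((∑ i, dilate (lam i) D).card : ℝ) ≤
      (((∑ i, dilate (lam i) D) + D).card : ℝ) := by
    exact_mod_cast Finset.card_le_card (Finset.subset_add_left _ hD0)
  -- final exponent comparison
  have hexp : ((2 + ∑ i : Fin h, E i : ℕ) : ℝ) ≤
      (7 : ℝ) + 12 * ∑ i, Real.logb 2 (1 + (|lam i| : ℤ)) := by
    push_cast
    have hterm : ∀ i : Fin h, ((E i : ℕ) : ℝ) ≤
        12 * Real.logb 2 (1 + ((|lam i| : ℤ) : ℝ)) := by
      intro i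
      have hna : 1 ≤ (lam i).natAbs := Int.natAbs_pos.2 (hlam i)
      have h1 := exp_le (lam i).natAbs hna
      have habs : ((|lam i| : ℤ) : ℝ) = ((lam i).natAbs : ℝ) := by
        rw [Nat.cast_natAbs, Int.cast_abs]
      rw [habs, hE]
      push_cast
      linarith
    have hsum : (∑ i : Fin h, ((E i : ℕ) : ℝ)) ≤
        ∑ i, 12 * Real.logb 2 (1 + ((|lam i| : ℤ) : ℝ)) :=
      Finset.sum_le_sum (fun i _ => hterm i)
    rw [← Finset.mul_sum] at hsum
    push_cast at hsum
    linarith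
  have hfinal : (((∑ i, dilate (lam i) D) + D).card : ℝ) ≤
      K ^ ((2 + ∑ i : Fin h, E i : ℕ)) * A.card := by
    calc (((∑ i, dilate (lam i) D) + D).card : ℝ)
        ≤ (D.card : ℝ) * ∏ i : Fin h, (K ^ (E i)) := hsumD
      _ ≤ (K ^ 2 * A.card) * ∏ i : Fin h, (K ^ (E i)) := by
          gcongr
      _ = K ^ ((2 + ∑ i : Fin h, E i : ℕ)) * A.card := by
          rw [Finset.prod_pow_eq_pow_sum, pow_add]
          ring
  calc ((∑ i, dilate (lam i) A).card : ℝ)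
      ≤ (((∑ i, dilate (lam i) D) + D).card : ℝ) := hcard1.trans hcard2
    _ ≤ K ^ ((2 + ∑ i : Fin h, E i : ℕ)) * A.card := hfinal
    _ ≤ K ^ ((7 : ℝ) + 12 * ∑ i, Real.logb 2 (1 + (|lam i| : ℤ))) * A.card := by
        gcongr
        rw [← Real.rpow_natCast K (2 + ∑ i : Fin h, E i)]
        exact Real.rpow_le_rpow_of_exponent_le hK1 hexp
end

section
/- Let A be a finite nonempty subset of an abelian group, let K be a real number with |A+A| = K·|A|, and let λ₁, …, λ_h be nonzero integers. Let r = maxᵢ ⌊log₂|λᵢ|⌋, and for each i let sᵢ denote the number of ones in the binary expansion of |λᵢ| (i.e., the number of indices j with 0 ≤ j ≤ r such that the coefficient of 2^j in the binary expansion of |λᵢ| equals 1). Then |λ₁·A + λ₂·A + … + λ_h·A| ≤ K^(7 + 10r + 2·Σᵢ sᵢ) · |A|. -/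
/-!
Petridis' lemma gives a nonempty `A₀ ⊆ A` with `|A₀ + A + C| ≤ K |A₀ + C|` for every `C`, and with
Ruzsa's triangle inequality also `|A₀ + C - A| ≤ K² |A₀ + C|`. Writing every `λᵢ = εᵢ + 2μᵢ` with
`εᵢ ∈ {-1, 0, 1}` its last binary digit, the summands `εᵢ·A` are absorbed into `A₀` at cost `K²`
each, and `|A₀ + 2·Z| ≤ K⁶ |A₀ + Z|` halves all remaining `λᵢ` at once. After `r + 1` rounds
`|A₀ + ∑ λᵢ·A| ≤ K^(6(r+1) + 2∑ sᵢ) |A₀|`.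
-/

open Pointwise

open Finset

lemma Nat.digits_sum_eq_mod_add {b : ℕ} (hb : 1 < b) (n : ℕ) :
    (Nat.digits b n).sum = n % b + (Nat.digits b (n / b)).sum := by
  rcases n.eq_zero_or_pos with rfl | hn
  · simp
  · rw [Nat.digits_def' hb hn, List.sum_cons]

section

variable {G : Type} [AddCommGroup G] [DecidableEq G]

lemma dilate_eq_imageAddMonoidHom (l : ℤ) :
    (dilate l : Finset G → Finset G) = imageAddMonoidHom (zsmulAddGroupHom l : G →+ G) :=
  rfl

lemma dilate_add (l : ℤ) (X Y : Finset G) : dilate l (X + Y) = dilate l X + dilate l Y := by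
  rw [dilate_eq_imageAddMonoidHom, map_add]

lemma dilate_sum {ι : Type} (l : ℤ) (I : Finset ι) (f : ι → Finset G) :
    dilate l (∑ i ∈ I, f i) = ∑ i ∈ I, dilate l (f i) := by
  rw [dilate_eq_imageAddMonoidHom, map_sum]

lemma dilate_sub (l : ℤ) (X Y : Finset G) : dilate l (X - Y) = dilate l X - dilate l Y :=
  image_image₂_distrib fun a b => smul_sub l a b

lemma dilate_mul (l m : ℤ) (A : Finset G) : dilate (l * m) A = dilate l (dilate m A) := by
  simp only [dilate, image_image, Function.comp_def, mul_smul]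

lemma dilate_one (A : Finset G) : dilate 1 A = A := by
  simp [dilate]

lemma dilate_neg_one (A : Finset G) : dilate (-1) A = -A := by
  simpa [dilate] using image_neg_eq_neg A

lemma dilate_zero {A : Finset G} (hA : A.Nonempty) : dilate 0 A = 0 := by
  simp only [dilate, zero_smul]
  exact image_const hA 0

lemma dilate_add_subset (l m : ℤ) (A : Finset G) :
    dilate (l + m) A ⊆ dilate l A + dilate m A := by
  intro x hx
  obtain ⟨a, ha, rfl⟩ := mem_image.1 hx
  rw [add_zsmul]
  exact add_mem_add (mem_image_of_mem _ ha) (mem_image_of_mem _ ha)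

lemma dilate_two_subset_add (A : Finset G) : dilate 2 A ⊆ A + A := by
  simpa [dilate_one] using dilate_add_subset 1 1 A

lemma card_dilate_mul_card_le_card_add {l : ℤ} {P : Finset G} {v : G} (hP : ∀ p ∈ P, l • p = v)
    (X : Finset G) : #(dilate l X) * #P ≤ #(X + P) := by
  rw [mul_comm]
  refine mul_card_image_le_card_of_maps_to (f := fun y => l • y - v) ?_ _ ?_
  · intro y hy
    obtain ⟨x, hx, p, hp, rfl⟩ := mem_add.1 hy
    show l • (x + p) - v ∈ dilate l X
    rw [smul_add, hP p hp, add_sub_cancel_right]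
    exact mem_image_of_mem _ hx
  · intro b hb
    obtain ⟨x, hx, rfl⟩ := mem_image.1 hb
    rw [← card_singleton_add x P]
    refine card_le_card fun y hy => ?_
    obtain ⟨x', hx', p, hp, rfl⟩ := mem_add.1 hy
    rw [mem_singleton.1 hx']
    exact mem_filter.2 ⟨add_mem_add hx hp, by simp [smul_add, hP p hp]⟩

lemma exists_card_le_card_fiber_mul_card_dilate {A : Finset G} (hA : A.Nonempty) (l : ℤ) :
    ∃ P ⊆ A, ∃ v : G, (∀ p ∈ P, l • p = v) ∧ #A ≤ #P * #(dilate l A) := by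
  obtain ⟨v, -, hv⟩ :=
    exists_max_image (dilate l A) (fun v => #{a ∈ A | l • a = v}) (hA.image _)
  exact ⟨_, filter_subset _ _, v, fun p hp => (mem_filter.1 hp).2, card_le_mul_card_image A _ hv⟩

variable {A A₀ : Finset G} {K : ℝ}

structure IsPetridisSubset (K : ℝ) (A₀ A : Finset G) : Prop where
  subset : A₀ ⊆ A
  nonempty : A₀.Nonempty
  card_add_add_le (C : Finset G) : (#(A₀ + A + C) : ℝ) ≤ K * #(A₀ + C)

/-- A nonempty `A₀ ⊆ A` minimising `|A₀ + A| / |A₀|` works. -/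
theorem exists_isPetridisSubset (hA : A.Nonempty) (hK : (#(A + A) : ℝ) ≤ K * #A) :
    ∃ A₀, IsPetridisSubset K A₀ A := by
  have hAmem : A ∈ A.powerset.erase ∅ :=
    mem_erase_of_ne_of_mem hA.ne_empty (mem_powerset_self _)
  obtain ⟨A₀, hA₀, hmin⟩ :=
    exists_min_image (A.powerset.erase ∅) (fun C => (#(C + A) : ℝ) / #C) ⟨A, hAmem⟩
  rw [mem_erase, mem_powerset, ← nonempty_iff_ne_empty] at hA₀
  obtain ⟨hA₀, hA₀A⟩ := hA₀
  have hA₀pos : (0 : ℝ) < #A₀ := by exact_mod_cast hA₀.card_pos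
  have hratio : (#(A₀ + A) : ℝ) ≤ K * #A₀ := by
    have hApos : (0 : ℝ) < #A := by exact_mod_cast hA.card_pos
    have := (hmin A hAmem).trans ((div_le_iff₀ hApos).2 hK)
    rwa [div_le_iff₀ hA₀pos] at this
  have hminimal : ∀ A' ⊆ A₀, #(A₀ + A) * #A' ≤ #(A' + A) * #A₀ := by
    intro A' hA'
    obtain rfl | hA'ne := A'.eq_empty_or_nonempty
    · simp
    have := hmin A' (mem_erase_of_ne_of_mem hA'ne.ne_empty (mem_powerset.2 (hA'.trans hA₀A)))
    rw [div_le_div_iff₀ hA₀pos (by exact_mod_cast hA'ne.card_pos)] at this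
    exact_mod_cast this
  refine ⟨A₀, hA₀A, hA₀, fun C => le_of_mul_le_mul_right ?_ hA₀pos⟩
  calc (#(A₀ + A + C) : ℝ) * #A₀ = #(C + A₀ + A) * #A₀ := by
        rw [add_right_comm, add_comm A₀ C]
    _ ≤ #(A₀ + A) * #(C + A₀) := by
        exact_mod_cast pluennecke_petridis_inequality_add C hminimal
    _ ≤ K * #A₀ * #(A₀ + C) := by rw [add_comm C]; gcongr
    _ = K * #(A₀ + C) * #A₀ := by ring

namespace IsPetridisSubset

lemma card_add_le (h : IsPetridisSubset K A₀ A) : (#(A₀ + A) : ℝ) ≤ K * #A₀ := by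
  simpa using h.card_add_add_le 0

lemma one_le (h : IsPetridisSubset K A₀ A) : 1 ≤ K := by
  have hA₀pos : (0 : ℝ) < #A₀ := by exact_mod_cast h.nonempty.card_pos
  have hle : (#A₀ : ℝ) ≤ #(A₀ + A) := by
    exact_mod_cast card_le_card_add_right (h.nonempty.mono h.subset)
  exact le_of_mul_le_mul_right (by simpa using hle.trans h.card_add_le) hA₀pos

lemma nonneg (h : IsPetridisSubset K A₀ A) : 0 ≤ K :=
  zero_le_one.trans h.one_le

lemma card_add_sub_le (h : IsPetridisSubset K A₀ A) (hK : (#(A + A) : ℝ) ≤ K * #A)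
    (W : Finset G) : (#(A₀ + W - A) : ℝ) ≤ K ^ 2 * #(A₀ + W) := by
  have hK0 := h.nonneg
  refine le_of_mul_le_mul_right ?_ (by exact_mod_cast (h.nonempty.mono h.subset).card_pos :
    (0 : ℝ) < #A)
  calc (#(A₀ + W - A) : ℝ) * #A ≤ #(A₀ + W + A) * #(A + A) := by
        exact_mod_cast ruzsa_triangle_inequality_sub_add_add _ _ _
    _ ≤ K * #(A₀ + W) * (K * #A) := by
        rw [add_right_comm]
        gcongr
        exact h.card_add_add_le W
    _ = K ^ 2 * #(A₀ + W) * #A := by ring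

lemma card_add_add_dilate_le (h : IsPetridisSubset K A₀ A) (hK : (#(A + A) : ℝ) ≤ K * #A)
    {σ : ℤ} (hσ : σ.natAbs ≤ 1) (W : Finset G) :
    (#(A₀ + W + dilate σ A) : ℝ) ≤ K ^ (2 * σ.natAbs) * #(A₀ + W) := by
  obtain rfl | rfl | rfl : σ = 0 ∨ σ = 1 ∨ σ = -1 := by omega
  · simp [dilate_zero (h.nonempty.mono h.subset)]
  · rw [dilate_one, add_right_comm]
    calc (#(A₀ + A + W) : ℝ) ≤ K * #(A₀ + W) := h.card_add_add_le W
      _ ≤ K ^ 2 * #(A₀ + W) := by gcongr; nlinarith [h.one_le]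
  · rw [dilate_neg_one, ← sub_eq_add_neg]
    exact h.card_add_sub_le hK W

lemma card_add_add_sum_dilate_le (h : IsPetridisSubset K A₀ A) (hK : (#(A + A) : ℝ) ≤ K * #A)
    {ι : Type} (I : Finset ι) (σ : ι → ℤ) (hσ : ∀ i ∈ I, (σ i).natAbs ≤ 1) (W : Finset G) :
    (#(A₀ + W + ∑ i ∈ I, dilate (σ i) A) : ℝ) ≤
      K ^ (2 * ∑ i ∈ I, (σ i).natAbs) * #(A₀ + W) := by
  induction I using Finset.cons_induction generalizing W with
  | empty => simp
  | cons i I hi ih =>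
    have hK0 := h.nonneg
    rw [sum_cons, sum_cons, ← add_assoc, add_assoc A₀]
    calc (#(A₀ + (W + dilate (σ i) A) + ∑ j ∈ I, dilate (σ j) A) : ℝ)
        ≤ K ^ (2 * ∑ j ∈ I, (σ j).natAbs) * #(A₀ + (W + dilate (σ i) A)) :=
          ih (fun j hj => hσ j (mem_cons_of_mem hj)) _
      _ ≤ K ^ (2 * ∑ j ∈ I, (σ j).natAbs) * (K ^ (2 * (σ i).natAbs) * #(A₀ + W)) := by
          rw [← add_assoc]
          gcongr
          exact h.card_add_add_dilate_le hK (hσ i (mem_cons_self i I)) W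
      _ = K ^ (2 * ((σ i).natAbs + ∑ j ∈ I, (σ j).natAbs)) * #(A₀ + W) := by ring

lemma card_sub_add_add_le (h : IsPetridisSubset K A₀ A) (hK : (#(A + A) : ℝ) ≤ K * #A)
    (Z : Finset G) : (#(A - A + Z + A) : ℝ) ≤ K ^ 4 * #(A₀ + Z) := by
  have hK0 := h.nonneg
  refine le_of_mul_le_mul_right ?_ (by exact_mod_cast h.nonempty.card_pos : (0 : ℝ) < #A₀)
  calc (#(A - A + Z + A) : ℝ) * #A₀ = #(A + (Z + A - A)) * #A₀ := by
        simp only [sub_eq_add_neg]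
        ac_rfl
    _ ≤ #(A + A₀) * #(A₀ + (Z + A - A)) := by
        exact_mod_cast ruzsa_triangle_inequality_add_add_add _ _ _
    _ ≤ K * #A₀ * (K ^ 2 * (K * #(A₀ + Z))) := by
        rw [add_comm A, ← add_sub_assoc]
        gcongr
        · exact h.card_add_le
        · refine (h.card_add_sub_le hK _).trans ?_
          rw [← add_assoc, add_right_comm]
          gcongr
          exact h.card_add_add_le Z
    _ = K ^ 4 * #(A₀ + Z) * #A₀ := by ring

/-- Cover `A₀` by few translates of `2·A - 2·A` (Ruzsa), so that `A₀ + 2·Z` lies in few translates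
of `2·(A - A + Z)`; the latter is small because each of its points has a whole fiber of the
doubling map of `A` above it inside `A - A + Z + A`. -/
lemma card_add_dilate_two_le (h : IsPetridisSubset K A₀ A) (hK : (#(A + A) : ℝ) ≤ K * #A)
    (Z : Finset G) : (#(A₀ + dilate 2 Z) : ℝ) ≤ K ^ 6 * #(A₀ + Z) := by
  have hK0 := h.nonneg
  have hA : A.Nonempty := h.nonempty.mono h.subset
  obtain ⟨P, hPA, v, hPv, hAP⟩ := exists_card_le_card_fiber_mul_card_dilate hA 2
  have hB : (0 : ℝ) < #(dilate 2 A) := by exact_mod_cast (hA.image _).card_pos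
  have hP : (0 : ℝ) < #P := by
    have := hA.card_pos.trans_le hAP
    exact_mod_cast pos_of_mul_pos_left this (Nat.zero_le _)
  have hA₀B : (#(A₀ + dilate 2 A) : ℝ) ≤ K ^ 2 * #A₀ :=
    calc (#(A₀ + dilate 2 A) : ℝ) ≤ #(A₀ + A + A) := by
          rw [add_assoc]
          exact_mod_cast card_le_card (add_subset_add_left (dilate_two_subset_add A))
      _ ≤ K * (K * #A₀) := (h.card_add_add_le A).trans (by gcongr; exact h.card_add_le)
      _ = K ^ 2 * #A₀ := by ring
  obtain ⟨F, -, hF, hcover⟩ := ruzsa_covering_add (A := A₀) (B := dilate 2 A) (hA.image _)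
    (K := K ^ 2 * #A₀ / #(dilate 2 A)) (by rwa [div_mul_cancel₀ _ hB.ne'])
  have hsub : A₀ + dilate 2 Z ⊆ F + dilate 2 (A - A + Z) := by
    rw [dilate_add, dilate_sub, ← add_assoc]
    exact add_subset_add_right hcover
  have hfibers : (#(dilate 2 (A - A + Z)) : ℝ) * #P ≤ K ^ 4 * #(A₀ + Z) :=
    calc (#(dilate 2 (A - A + Z)) : ℝ) * #P ≤ #(A - A + Z + P) := by
          exact_mod_cast card_dilate_mul_card_le_card_add hPv _
      _ ≤ #(A - A + Z + A) := by exact_mod_cast card_le_card (add_subset_add_left hPA)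
      _ ≤ K ^ 4 * #(A₀ + Z) := h.card_sub_add_add_le hK Z
  refine le_of_mul_le_mul_right ?_ (mul_pos hP hB)
  calc (#(A₀ + dilate 2 Z) : ℝ) * (#P * #(dilate 2 A))
      ≤ #F * #(dilate 2 (A - A + Z)) * (#P * #(dilate 2 A)) := by
        gcongr
        exact_mod_cast (card_le_card hsub).trans Finset.card_add_le
    _ = (#F * #(dilate 2 A)) * (#(dilate 2 (A - A + Z)) * #P) := by ring
    _ ≤ (K ^ 2 * #A₀) * (K ^ 4 * #(A₀ + Z)) :=
        mul_le_mul ((le_div_iff₀ hB).1 hF) hfibers (by positivity) (by positivity)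
    _ = K ^ 6 * #(A₀ + Z) * #A₀ := by ring
    _ ≤ K ^ 6 * #(A₀ + Z) * (#P * #(dilate 2 A)) := by
        gcongr
        exact_mod_cast (card_le_card h.subset).trans hAP

lemma card_add_sum_dilate_le (h : IsPetridisSubset K A₀ A) (hK : (#(A + A) : ℝ) ≤ K * #A)
    {ι : Type} (r : ℕ) (I : Finset ι) (lam : ι → ℤ) (hlam : ∀ i ∈ I, (lam i).natAbs < 2 ^ r) :
    (#(A₀ + ∑ i ∈ I, dilate (lam i) A) : ℝ) ≤
      K ^ (6 * r + 2 * ∑ i ∈ I, (Nat.digits 2 (lam i).natAbs).sum) * #A₀ := by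
  have hK0 := h.nonneg
  induction r generalizing lam with
  | zero =>
    have hzero : ∀ i ∈ I, lam i = 0 := fun i hi => by simpa using hlam i hi
    have hsum : ∑ i ∈ I, dilate (lam i) A = 0 := sum_eq_zero fun i hi => by
      rw [hzero i hi, dilate_zero (h.nonempty.mono h.subset)]
    have hdigits : ∑ i ∈ I, (Nat.digits 2 (lam i).natAbs).sum = 0 := sum_eq_zero fun i hi => by
      simp [hzero i hi]
    simp [hsum, hdigits]
  | succ r ih =>
    set Z := ∑ i ∈ I, dilate ((lam i).tdiv 2) A
    have hsplit : ∑ i ∈ I, dilate (lam i) A ⊆ dilate 2 Z + ∑ i ∈ I, dilate ((lam i).tmod 2) A := by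
      rw [dilate_sum, ← sum_add_distrib]
      refine sum_le_sum fun i _ => ?_
      rw [← dilate_mul, add_comm]
      conv_lhs => rw [← Int.tmod_add_mul_tdiv (lam i) 2]
      exact dilate_add_subset _ _ _
    have hdigits : ∑ i ∈ I, (Nat.digits 2 (lam i).natAbs).sum = ∑ i ∈ I, ((lam i).tmod 2).natAbs
        + ∑ i ∈ I, (Nat.digits 2 ((lam i).tdiv 2).natAbs).sum := by
      rw [← sum_add_distrib]
      refine sum_congr rfl fun i _ => ?_
      rw [Int.natAbs_tmod, Int.natAbs_tdiv, Nat.digits_sum_eq_mod_add one_lt_two]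
      rfl
    have hdiv : ∀ i ∈ I, ((lam i).tdiv 2).natAbs < 2 ^ r := fun i hi => by
      rw [Int.natAbs_tdiv]
      exact Nat.div_lt_of_lt_mul (by simpa [pow_succ, mul_comm] using hlam i hi)
    have hmod : ∀ i ∈ I, ((lam i).tmod 2).natAbs ≤ 1 := fun i _ => by
      rw [Int.natAbs_tmod]
      exact Nat.le_of_lt_succ (Nat.mod_lt _ two_pos)
    calc (#(A₀ + ∑ i ∈ I, dilate (lam i) A) : ℝ)
        ≤ #(A₀ + dilate 2 Z + ∑ i ∈ I, dilate ((lam i).tmod 2) A) := by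
          rw [add_assoc]
          exact_mod_cast card_le_card (add_subset_add_left hsplit)
      _ ≤ K ^ (2 * ∑ i ∈ I, ((lam i).tmod 2).natAbs) * #(A₀ + dilate 2 Z) :=
          h.card_add_add_sum_dilate_le hK I _ hmod _
      _ ≤ K ^ (2 * ∑ i ∈ I, ((lam i).tmod 2).natAbs) * (K ^ 6 *
            (K ^ (6 * r + 2 * ∑ i ∈ I, (Nat.digits 2 ((lam i).tdiv 2).natAbs).sum) * #A₀)) := by
          gcongr
          exact (h.card_add_dilate_two_le hK Z).trans (by gcongr; exact ih _ hdiv)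
      _ = K ^ (6 * (r + 1) + 2 * ∑ i ∈ I, (Nat.digits 2 (lam i).natAbs).sum) * #A₀ := by
          rw [hdigits]
          ring

end IsPetridisSubset

end

theorem bukh_sum_of_dilates_binary_general {G : Type} [AddCommGroup G] [DecidableEq G]
    (A : Finset G) (hA : A.Nonempty) (K : ℝ) (h : ℕ) (lam : Fin h → ℤ)
    (hK : ((A + A).card : ℝ) = K * A.card)
    (r : ℕ) (hr : r = Finset.univ.sup fun i => Nat.log 2 (lam i).natAbs)
    (s : Fin h → ℕ) (hs : ∀ i, s i = (Nat.digits 2 (lam i).natAbs).sum) :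
    ((∑ i, dilate (lam i) A).card : ℝ) ≤ K ^ (7 + 10 * r + 2 * ∑ i, s i) * A.card := by
  obtain ⟨A₀, hA₀⟩ := exists_isPetridisSubset hA hK.le
  have hlog : ∀ i, Nat.log 2 (lam i).natAbs ≤ r := fun i =>
    hr ▸ le_sup (f := fun i => Nat.log 2 (lam i).natAbs) (mem_univ i)
  have hlam : ∀ i ∈ univ, (lam i).natAbs < 2 ^ (r + 1) := fun i _ =>
    (Nat.lt_pow_succ_log_self one_lt_two _).trans_le
      (Nat.pow_le_pow_right two_pos (Nat.succ_le_succ (hlog i)))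
  have hK1 := hA₀.one_le
  calc ((∑ i, dilate (lam i) A).card : ℝ) ≤ #(A₀ + ∑ i, dilate (lam i) A) := by
        exact_mod_cast card_le_card_add_left hA₀.nonempty
    _ ≤ K ^ (6 * (r + 1) + 2 * ∑ i, s i) * #A₀ := by
        simpa only [hs] using hA₀.card_add_sum_dilate_le hK.le (r + 1) univ lam hlam
    _ ≤ K ^ (7 + 10 * r + 2 * ∑ i, s i) * A.card :=
        mul_le_mul (pow_le_pow_right₀ hK1 (by omega))
          (by exact_mod_cast card_le_card hA₀.subset) (by positivity) (by positivity)

/-- Bukh's theorem, binary-digit form: with `r = maxᵢ ⌊log₂ |λᵢ|⌋` and `sᵢ` the number of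
ones in the binary expansion of `|λᵢ|`, if `|A+A| = K|A|` then
`|λ₁·A + ⋯ + λ_h·A| ≤ K^(7 + 10r + 2∑ᵢ sᵢ) |A|`. -/
theorem bukh_sum_of_dilates_binary {G : Type} [AddCommGroup G] [DecidableEq G]
    (A : Finset G) (hA : A.Nonempty) (K : ℝ) (h : ℕ) (lam : Fin h → ℤ)
    (hlam : ∀ i, lam i ≠ 0)
    (hK : ((A + A).card : ℝ) = K * A.card)
    (r : ℕ) (hr : r = Finset.univ.sup fun i => Nat.log 2 (lam i).natAbs)
    (s : Fin h → ℕ) (hs : ∀ i, s i = (Nat.digits 2 (lam i).natAbs).sum) :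
    ((∑ i, dilate (lam i) A).card : ℝ) ≤ K ^ (7 + 10 * r + 2 * ∑ i, s i) * A.card :=
  bukh_sum_of_dilates_binary_general A hA K h lam hK r hr s hs
end

section
/- Let A and B be finite nonempty subsets of an abelian group, let K > 0 be a real number with |A+A| ≤ K·|A|, and let p₁ and p₂ be nonnegative integers. Then |B + p₁A − p₂A| ≤ K^(p₁+p₂+1) · |B+A|, where p₁A denotes the p₁-fold iterated sumset of A and p₁A − p₂A = {x − y : x ∈ p₁A, y ∈ p₂A}. -/
/-!
Choose a nonempty `X ⊆ A` minimising the ratio `|X + A| / |X|`; it is at most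
`|A + A| / |A| ≤ K`. By the Plünnecke–Petridis inequality, adding `A` to any set of the form
`C + X` multiplies its size by at most this ratio, so `|C + nA + X| ≤ K ^ n |C + X|`.
Ruzsa's triangle inequality through `X` gives
`|B + p₁A − p₂A| |X| ≤ |B + p₁A + X| |p₂A + X| ≤ K ^ (p₁ + p₂) |B + X| |X|`,
and `|B + X| ≤ |B + A|`.
-/

open Pointwise Finset

namespace Finset

variable {G : Type*} [AddCommGroup G] [DecidableEq G]

lemma exists_nonempty_subset_min_card_add_ratio {A : Finset G} (hA : A.Nonempty)
    (B : Finset G) :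
    ∃ X ⊆ A, X.Nonempty ∧ ∀ X' ⊆ A, #(X + B) * #X' ≤ #(X' + B) * #X := by
  have hA' : A ∈ A.powerset.erase ∅ := mem_erase_of_ne_of_mem hA.ne_empty (mem_powerset_self _)
  obtain ⟨X, hX, hXmin⟩ :=
    exists_min_image (A.powerset.erase ∅) (fun X ↦ (#(X + B) / #X : ℚ≥0)) ⟨A, hA'⟩
  rw [mem_erase, mem_powerset, ← nonempty_iff_ne_empty] at hX
  obtain ⟨hXne, hXA⟩ := hX
  refine ⟨X, hXA, hXne, fun X' hX'A ↦ ?_⟩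
  obtain rfl | hX' := X'.eq_empty_or_nonempty
  · simp
  have hratio := hXmin X' (mem_erase_of_ne_of_mem hX'.ne_empty (mem_powerset.2 hX'A))
  rw [div_le_div_iff₀ (by simpa using hXne.card_pos) (by simpa using hX'.card_pos)] at hratio
  exact_mod_cast hratio

variable {A X : Finset G}

lemma card_add_nsmul_add_mul_pow_le (hX : ∀ X' ⊆ X, #(X + A) * #X' ≤ #(X' + A) * #X)
    (C : Finset G) (n : ℕ) :
    #(C + n • A + X) * #X ^ n ≤ #(X + A) ^ n * #(C + X) := by
  induction n with
  | zero => simp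
  | succ n ih =>
    calc #(C + (n + 1) • A + X) * #X ^ (n + 1)
        = #(C + n • A + X + A) * #X * #X ^ n := by
          rw [succ_nsmul, ← add_assoc, add_right_comm _ A, pow_succ]; ring
      _ ≤ #(X + A) * #(C + n • A + X) * #X ^ n :=
          Nat.mul_le_mul_right _ (pluennecke_petridis_inequality_add (C + n • A) hX)
      _ ≤ #(X + A) * (#(X + A) ^ n * #(C + X)) := by rw [mul_assoc]; gcongr
      _ = #(X + A) ^ (n + 1) * #(C + X) := by ring

lemma card_add_nsmul_sub_nsmul_mul_pow_le (hX : ∀ X' ⊆ X, #(X + A) * #X' ≤ #(X' + A) * #X)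
    (hXne : X.Nonempty) (B : Finset G) (m n : ℕ) :
    #(B + m • A - n • A) * #X ^ (m + n) ≤ #(X + A) ^ (m + n) * #(B + X) := by
  refine Nat.le_of_mul_le_mul_right ?_ hXne.card_pos
  calc #(B + m • A - n • A) * #X ^ (m + n) * #X
      = #(B + m • A - n • A) * #X * (#X ^ m * #X ^ n) := by ring
    _ ≤ #(B + m • A + X) * #(0 + n • A + X) * (#X ^ m * #X ^ n) := by
        rw [zero_add]
        exact Nat.mul_le_mul_right _ (ruzsa_triangle_inequality_sub_add_add _ X _)
    _ = (#(B + m • A + X) * #X ^ m) * (#(0 + n • A + X) * #X ^ n) := by ring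
    _ ≤ (#(X + A) ^ m * #(B + X)) * (#(X + A) ^ n * #(0 + X)) :=
        Nat.mul_le_mul (card_add_nsmul_add_mul_pow_le hX _ _)
          (card_add_nsmul_add_mul_pow_le hX _ _)
    _ = #(X + A) ^ (m + n) * #(B + X) * #X := by rw [zero_add]; ring

end Finset

theorem card_add_nsmul_sub_nsmul_le_general {G : Type} [AddCommGroup G] [DecidableEq G]
    (A B : Finset G) (hA : A.Nonempty) (K : ℝ)
    (p₁ p₂ : ℕ)
    (hAA : ((A + A).card : ℝ) ≤ K * A.card) :
    ((B + p₁ • A - p₂ • A).card : ℝ) ≤ K ^ (p₁ + p₂ + 1) * (B + A).card := by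
  obtain ⟨X, hXA, hXne, hXmin⟩ := exists_nonempty_subset_min_card_add_ratio hA A
  have hA0 : (0 : ℝ) < #A := by exact_mod_cast hA.card_pos
  have hK1 : 1 ≤ K := by
    have : (#A : ℝ) ≤ #(A + A) := by exact_mod_cast card_le_card_add_right hA
    nlinarith
  have hXK : (#(X + A) : ℝ) ≤ K * #X := by
    have : (#(X + A) : ℝ) * #A ≤ #(A + A) * #X := by exact_mod_cast hXmin A subset_rfl
    nlinarith
  have hS : (#(B + p₁ • A - p₂ • A) : ℝ) * #X ^ (p₁ + p₂)
      ≤ (K * #X) ^ (p₁ + p₂) * #(B + X) :=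
    calc (#(B + p₁ • A - p₂ • A) : ℝ) * #X ^ (p₁ + p₂)
        ≤ #(X + A) ^ (p₁ + p₂) * #(B + X) := by
          exact_mod_cast card_add_nsmul_sub_nsmul_mul_pow_le
            (fun X' hX' ↦ hXmin X' (hX'.trans hXA)) hXne B p₁ p₂
      _ ≤ (K * #X) ^ (p₁ + p₂) * #(B + X) := by gcongr
  rw [mul_pow, mul_right_comm] at hS
  have hBX : (#(B + X) : ℝ) ≤ #(B + A) := by
    exact_mod_cast card_le_card (add_subset_add_left hXA)
  calc (#(B + p₁ • A - p₂ • A) : ℝ)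
      ≤ K ^ (p₁ + p₂) * #(B + X) := le_of_mul_le_mul_right hS (by positivity)
    _ ≤ K ^ (p₁ + p₂ + 1) * #(B + A) := by
        gcongr ?_ * ?_
        exact pow_le_pow_right₀ hK1 (Nat.le_succ _)

/-- Corollary 2.2: if `|A+A| ≤ K|A|` then `|B + p₁A − p₂A| ≤ K^(p₁+p₂+1) |B+A|`,
where `pA` denotes the `p`-fold iterated sumset. -/
theorem card_add_nsmul_sub_nsmul_le {G : Type} [AddCommGroup G] [DecidableEq G]
    (A B : Finset G) (hA : A.Nonempty) (hB : B.Nonempty) (K : ℝ) (hK : 0 < K)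
    (p₁ p₂ : ℕ)
    (hAA : ((A + A).card : ℝ) ≤ K * A.card) :
    ((B + p₁ • A - p₂ • A).card : ℝ) ≤ K ^ (p₁ + p₂ + 1) * (B + A).card :=
  card_add_nsmul_sub_nsmul_le_general A B hA K p₁ p₂ hAA
end

section
/- Let q be a positive integer, let k₁, ℓ₁, …, k_q, ℓ_q be nonnegative integers, let K > 0 be a real number, and let A₁, …, A_q, C be finite nonempty subsets of an abelian group with |Aᵢ+Aᵢ| ≤ K·|Aᵢ| for every i. Then |C + k₁A₁ − ℓ₁A₁ + … + k_qA_q − ℓ_qA_q| ≤ |C + A₁ + … + A_q| · K^(q + Σᵢ(kᵢ+ℓᵢ)). -/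
open Pointwise

private lemma nsmul_nonempty {G : Type} [AddCommGroup G] [DecidableEq G]
    {A : Finset G} (hA : A.Nonempty) (n : ℕ) : (n • A).Nonempty := by
  induction n with
  | zero => exact ⟨0, by simp⟩
  | succ n ih => rw [succ_nsmul]; exact ih.add hA

private lemma sum_nonempty {G ι : Type} [AddCommGroup G] [DecidableEq G]
    (s : Finset ι) (A : ι → Finset G) (h : ∀ i, (A i).Nonempty) :
    (∑ i ∈ s, A i).Nonempty := by
  classical
  induction s using Finset.cons_induction with
  | empty => exact ⟨0, by simp⟩
  | cons a s ha ih => rw [Finset.sum_cons]; exact (h a).add ih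

/-- Key lemma: `|D + mA − nA| ≤ |D + A| · K^(m+n+1)` when `|A+A| ≤ K|A|`. -/
private lemma key_lemma {G : Type} [AddCommGroup G] [DecidableEq G]
    (A D : Finset G) (hA : A.Nonempty) (K : ℝ) (hK : 0 < K)
    (hAA : ((A + A).card : ℝ) ≤ K * A.card) (m n : ℕ) :
    ((D + (m • A - n • A)).card : ℝ) ≤ ((D + A).card : ℝ) * K ^ (m + n + 1) := by
  have hApos : (0 : ℝ) < A.card := by exact_mod_cast hA.card_pos
  -- Ruzsa triangle inequality
  have h1 := Finset.ruzsa_triangle_inequality_add_add_negAdd D A (m • A - n • A)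
  have hneg : -(m • A - n • A) + A = (n + 1) • A - m • A := by
    rw [neg_sub, sub_add_eq_add_sub, ← succ_nsmul]
  rw [hneg] at h1
  -- Plünnecke-Ruzsa
  have h2 := Finset.pluennecke_ruzsa_inequality_nsmul_sub_nsmul_add hA A (n + 1) m
  have h2' : (((n + 1) • A - m • A).card : ℝ) ≤
      (((A + A).card : ℝ) / A.card) ^ (n + 1 + m) * A.card := by
    have h2r : ((((n + 1) • A - m • A).card : ℚ≥0) : ℝ) ≤
        ((((((A + A).card : ℚ≥0)) / ((A.card : ℚ≥0))) ^ (n + 1 + m) * ((A.card : ℚ≥0))) : ℚ≥0) :=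
      NNRat.cast_le.mpr h2
    push_cast at h2r
    exact_mod_cast h2r
  have hratio : (((A + A).card : ℝ) / A.card) ≤ K := by
    rw [div_le_iff₀ hApos]; exact hAA
  have hratio0 : (0 : ℝ) ≤ ((A + A).card : ℝ) / A.card := by positivity
  have h3 : (((n + 1) • A - m • A).card : ℝ) ≤ K ^ (n + 1 + m) * A.card := by
    calc (((n + 1) • A - m • A).card : ℝ)
        ≤ (((A + A).card : ℝ) / A.card) ^ (n + 1 + m) * A.card := h2'
      _ ≤ K ^ (n + 1 + m) * A.card := by
          gcongr
  have h1' : ((D + (m • A - n • A)).card : ℝ) * A.card ≤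
      ((D + A).card : ℝ) * (((n + 1) • A - m • A).card : ℝ) := by exact_mod_cast h1
  have h4 : ((D + (m • A - n • A)).card : ℝ) * A.card ≤
      ((D + A).card : ℝ) * (K ^ (n + 1 + m) * A.card) := by
    refine h1'.trans ?_
    gcongr
  have := le_of_mul_le_mul_right (by
    calc ((D + (m • A - n • A)).card : ℝ) * A.card
        ≤ ((D + A).card : ℝ) * (K ^ (n + 1 + m) * A.card) := h4
      _ = ((D + A).card : ℝ) * K ^ (n + 1 + m) * A.card := by ring) hApos
  calc ((D + (m • A - n • A)).card : ℝ)
      ≤ ((D + A).card : ℝ) * K ^ (n + 1 + m) := this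
    _ = ((D + A).card : ℝ) * K ^ (m + n + 1) := by rw [show n + 1 + m = m + n + 1 by ring]

private lemma main_aux {G ι : Type} [AddCommGroup G] [DecidableEq G]
    (K : ℝ) (hK : 0 < K) (k l : ι → ℕ) (A : ι → Finset G) (C : Finset G)
    (hA : ∀ i, (A i).Nonempty) (hC : C.Nonempty)
    (hAA : ∀ i, ((A i + A i).card : ℝ) ≤ K * (A i).card) (s : Finset ι) :
    ((C + ∑ i ∈ s, (k i • A i - l i • A i)).card : ℝ) ≤
      ((C + ∑ i ∈ s, A i).card : ℝ) * K ^ (s.card + ∑ i ∈ s, (k i + l i)) := by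
  classical
  induction s using Finset.cons_induction generalizing C with
  | empty => simp
  | cons a s ha ih =>
    rw [Finset.sum_cons, Finset.sum_cons, Finset.sum_cons, Finset.card_cons]
    have hX : (k a • A a - l a • A a).Nonempty :=
      (nsmul_nonempty (hA a) (k a)).sub (nsmul_nonempty (hA a) (l a))
    have step1 : ((C + (k a • A a - l a • A a + ∑ i ∈ s, (k i • A i - l i • A i))).card : ℝ) ≤
        ((C + (k a • A a - l a • A a) + ∑ i ∈ s, A i).card : ℝ) *
          K ^ (s.card + ∑ i ∈ s, (k i + l i)) := by
      rw [← add_assoc]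
      exact ih (C + (k a • A a - l a • A a)) (hC.add hX)
    have hD : (C + ∑ i ∈ s, A i).Nonempty := hC.add (sum_nonempty s A hA)
    have step2 : ((C + (k a • A a - l a • A a) + ∑ i ∈ s, A i).card : ℝ) ≤
        ((C + (A a + ∑ i ∈ s, A i)).card : ℝ) * K ^ (k a + l a + 1) := by
      have h := key_lemma (A a) (C + ∑ i ∈ s, A i) (hA a) K hK (hAA a) (k a) (l a)
      have e1 : C + (k a • A a - l a • A a) + ∑ i ∈ s, A i
          = C + ∑ i ∈ s, A i + (k a • A a - l a • A a) := by
        rw [add_right_comm]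
      have e2 : C + ∑ i ∈ s, A i + A a = C + (A a + ∑ i ∈ s, A i) := by
        rw [add_assoc, add_comm (∑ i ∈ s, A i)]
      rw [e1, ← e2]
      exact h
    calc ((C + (k a • A a - l a • A a + ∑ i ∈ s, (k i • A i - l i • A i))).card : ℝ)
        ≤ ((C + (k a • A a - l a • A a) + ∑ i ∈ s, A i).card : ℝ) *
            K ^ (s.card + ∑ i ∈ s, (k i + l i)) := step1
      _ ≤ ((C + (A a + ∑ i ∈ s, A i)).card : ℝ) * K ^ (k a + l a + 1) *
            K ^ (s.card + ∑ i ∈ s, (k i + l i)) := mul_le_mul_of_nonneg_right step2 (by positivity)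
      _ = ((C + (A a + ∑ i ∈ s, A i)).card : ℝ) *
            K ^ (s.card + 1 + (k a + l a + ∑ i ∈ s, (k i + l i))) := by
          rw [mul_assoc, ← pow_add]; congr 2; ring

/-- Proposition 2.3, inequality (6): if `|Aᵢ+Aᵢ| ≤ K|Aᵢ|` for each `i`, then
`|C + k₁A₁ − ℓ₁A₁ + ⋯ + k_qA_q − ℓ_qA_q| ≤ |C + A₁ + ⋯ + A_q| ⋅ K^(q + ∑ᵢ(kᵢ+ℓᵢ))`,
where `kA` denotes the `k`-fold iterated sumset. -/
theorem card_add_sum_nsmul_sub_nsmul_le {G : Type} [AddCommGroup G] [DecidableEq G]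
    (q : ℕ) (hq : 0 < q) (k l : Fin q → ℕ) (K : ℝ) (hK : 0 < K)
    (A : Fin q → Finset G) (C : Finset G)
    (hA : ∀ i, (A i).Nonempty) (hC : C.Nonempty)
    (hAA : ∀ i, ((A i + A i).card : ℝ) ≤ K * (A i).card) :
    ((C + ∑ i, (k i • A i - l i • A i)).card : ℝ) ≤
      ((C + ∑ i, A i).card : ℝ) * K ^ (q + ∑ i, (k i + l i)) := by
  have := main_aux K hK k l A C hA hC hAA Finset.univ
  simpa using this
end

section
/- Let q be a positive integer, let k₁, ℓ₁, …, k_q, ℓ_q be nonnegative integers, let K > 0 be a real number, and let A₁, …, A_q be finite nonempty subsets of an abelian group with |Aᵢ+Aᵢ| ≤ K·|Aᵢ| for every i. Then |k₁A₁ − ℓ₁A₁ + … + k_qA_q − ℓ_qA_q| ≤ |A₁ + … + A_q| · K^(q + Σᵢ(kᵢ+ℓᵢ)). -/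
open Pointwise Finset

private lemma plue_real {G : Type} [AddCommGroup G] [DecidableEq G] {K : ℝ}
    {A : Finset G} (hA : A.Nonempty) (hAA : ((A + A).card : ℝ) ≤ K * A.card)
    (m n : ℕ) : ((m • A - n • A).card : ℝ) ≤ K ^ (m + n) * A.card := by
  have hA0 : (0 : ℝ) < A.card := by exact_mod_cast hA.card_pos
  have h := Finset.pluennecke_ruzsa_inequality_nsmul_sub_nsmul_add hA A m n
  have h' : ((m • A - n • A).card : ℝ) ≤ (((A + A).card / A.card : ℝ)) ^ (m + n) * A.card := by
    have := (NNRat.cast_le (K := ℝ)).2 h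
    push_cast at this
    convert this using 3
  refine h'.trans ?_
  have hdiv : ((A + A).card / A.card : ℝ) ≤ K := (div_le_iff₀ hA0).2 hAA
  have hdn : (0 : ℝ) ≤ ((A + A).card / A.card : ℝ) := by positivity
  gcongr

private lemma step_real {G : Type} [AddCommGroup G] [DecidableEq G] {K : ℝ}
    {A : Finset G} (hA : A.Nonempty) (hAA : ((A + A).card : ℝ) ≤ K * A.card)
    (X : Finset G) (m n : ℕ) :
    ((X + (m • A - n • A)).card : ℝ) ≤ K ^ (m + n + 1) * (X + A).card := by
  have hA0 : (0 : ℝ) < A.card := by exact_mod_cast hA.card_pos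
  have hr := Finset.ruzsa_triangle_inequality_add_add_add X A (m • A - n • A)
  -- hr : #(X + (m•A - n•A)) * #A ≤ #(X + A) * #(A + (m•A - n•A))
  have hset : A + (m • A - n • A) = (m + 1) • A - n • A := by
    rw [sub_eq_add_neg, sub_eq_add_neg, ← add_assoc, add_comm A (m • A), ← succ_nsmul]
  rw [hset] at hr
  have hp : (((m + 1) • A - n • A).card : ℝ) ≤ K ^ (m + n + 1) * A.card := by
    have := plue_real hA hAA (m + 1) n
    calc (((m + 1) • A - n • A).card : ℝ) ≤ K ^ (m + 1 + n) * A.card := this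
      _ = K ^ (m + n + 1) * A.card := by ring_nf
  have hr' : ((X + (m • A - n • A)).card : ℝ) * A.card ≤
      ((X + A).card : ℝ) * (((m + 1) • A - n • A).card) := by exact_mod_cast hr
  have : ((X + (m • A - n • A)).card : ℝ) * A.card ≤
      K ^ (m + n + 1) * (X + A).card * A.card := by
    calc ((X + (m • A - n • A)).card : ℝ) * A.card
        ≤ ((X + A).card : ℝ) * (((m + 1) • A - n • A).card) := hr'
      _ ≤ ((X + A).card : ℝ) * (K ^ (m + n + 1) * A.card) := by gcongr
      _ = K ^ (m + n + 1) * (X + A).card * A.card := by ring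
  exact le_of_mul_le_mul_right this hA0

/-- Proposition 2.3, inequality (7): if `|Aᵢ+Aᵢ| ≤ K|Aᵢ|` for each `i`, then
`|k₁A₁ − ℓ₁A₁ + ⋯ + k_qA_q − ℓ_qA_q| ≤ |A₁ + ⋯ + A_q| ⋅ K^(q + ∑ᵢ(kᵢ+ℓᵢ))`,
where `kA` denotes the `k`-fold iterated sumset. -/
theorem card_sum_nsmul_sub_nsmul_le {G : Type} [AddCommGroup G] [DecidableEq G]
    (q : ℕ) (hq : 0 < q) (k l : Fin q → ℕ) (K : ℝ) (hK : 0 < K)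
    (A : Fin q → Finset G)
    (hA : ∀ i, (A i).Nonempty)
    (hAA : ∀ i, ((A i + A i).card : ℝ) ≤ K * (A i).card) :
    ((∑ i, (k i • A i - l i • A i)).card : ℝ) ≤
      ((∑ i, A i).card : ℝ) * K ^ (q + ∑ i, (k i + l i)) := by
  have key : ∀ s : Finset (Fin q),
      (((∑ i ∈ s, (k i • A i - l i • A i)) + ∑ i ∈ sᶜ, A i).card : ℝ) ≤
        K ^ (∑ i ∈ s, (k i + l i + 1)) * ((∑ i, A i).card : ℝ) := by
    intro s
    induction s using Finset.induction_on with
    | empty =>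
        simp [Finset.sum_empty]
    | @insert j s hj ih =>
        have hjc : j ∈ sᶜ := Finset.mem_compl.2 hj
        have hcompl : sᶜ = insert j (insert j s)ᶜ := by
          rw [Finset.compl_insert, Finset.insert_erase hjc]
        have hsum : ∑ i ∈ sᶜ, A i = A j + ∑ i ∈ (insert j s)ᶜ, A i := by
          rw [hcompl, Finset.sum_insert (by simp)]
        set X := (∑ i ∈ s, (k i • A i - l i • A i)) + ∑ i ∈ (insert j s)ᶜ, A i with hX
        have hrw : (∑ i ∈ insert j s, (k i • A i - l i • A i)) + ∑ i ∈ (insert j s)ᶜ, A i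
            = X + (k j • A j - l j • A j) := by
          rw [Finset.sum_insert hj, hX]
          exact add_rotate _ _ _
        have hrw2 : X + A j = (∑ i ∈ s, (k i • A i - l i • A i)) + ∑ i ∈ sᶜ, A i := by
          rw [hX, hsum]
          abel
        rw [hrw]
        calc ((X + (k j • A j - l j • A j)).card : ℝ)
            ≤ K ^ (k j + l j + 1) * (X + A j).card := step_real (hA j) (hAA j) X _ _
          _ = K ^ (k j + l j + 1) *
              (((∑ i ∈ s, (k i • A i - l i • A i)) + ∑ i ∈ sᶜ, A i).card : ℝ) := by rw [hrw2]
          _ ≤ K ^ (k j + l j + 1) *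
              (K ^ (∑ i ∈ s, (k i + l i + 1)) * ((∑ i, A i).card : ℝ)) := by
                gcongr
          _ = K ^ (∑ i ∈ insert j s, (k i + l i + 1)) * ((∑ i, A i).card : ℝ) := by
              rw [Finset.sum_insert hj, pow_add]; ring
  have h := key Finset.univ
  rw [Finset.compl_univ, Finset.sum_empty, add_zero] at h
  have hexp : (∑ i : Fin q, (k i + l i + 1)) = q + ∑ i, (k i + l i) := by
    rw [Finset.sum_add_distrib]
    simp [add_comm]
  rw [hexp] at h
  linarith [h]
end

section
/- There exists a threshold n₀ such that the following holds for all integers m ≥ n ≥ n₀ with n ≥ 10·(ln m)². For every bipartite graph G with parts X of size m and Y of size n (i.e., every edge set E ⊆ X × Y), there exist finitely many pairs (X₁,Y₁), …, (X_q,Y_q) with Xᵢ ⊆ X and Yᵢ ⊆ Y such that the complete bipartite edge sets Xᵢ × Yᵢ are pairwise disjoint, their union equals E, and Σᵢ(|Xᵢ| + |Yᵢ|) ≤ 3mn/ln m. -/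
/-!
Cut `Y` into about `n / k` blocks of at most `k` vertices. Inside a block `B`, sort the vertices
`x ∈ X` by their trace `N(x) ∩ B = T`; every trace class gives the biclique `{x | N(x) ∩ B = T} × T`.
The left sides of one block cost `|X|` in total and the right sides at most `2^k k`, so the whole
decomposition costs `(n / k + 1)(m + 2^k k)`. For `k = ⌊log₄ m⌋` we have `4^k ≤ m < 4^(k+1)`, hence
`mn / k ≤ 2mn / ln m`, and each of the remaining terms `2^k n`, `m`, `2^k k` is at most
`mn / (3 ln m)` because `3 ln m · 2^k ≤ 6k · 2^k ≤ 4^k ≤ m` for `k ≥ 5`, and `3 ln m ≤ n`.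
-/

open Finset Function

section Cost

variable {ι X Y : Type*} [Fintype ι]

def bicliqueCost (Xs : ι → Finset X) (Ys : ι → Finset Y) : ℕ :=
  ∑ i, (#(Xs i) + #(Ys i))

theorem bicliqueCost_comp_equiv {κ : Type*} [Fintype κ] (Xs : ι → Finset X) (Ys : ι → Finset Y)
    (e : κ ≃ ι) : bicliqueCost (Xs ∘ e) (Ys ∘ e) = bicliqueCost Xs Ys :=
  e.sum_comp fun i => #(Xs i) + #(Ys i)

theorem bicliqueCost_sigma {β : Type*} [Fintype β] {κ : β → Type*} [∀ b, Fintype (κ b)]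
    (Xs : ∀ b, κ b → Finset X) (Ys : ∀ b, κ b → Finset Y) :
    bicliqueCost (fun i : Σ b, κ b => Xs i.1 i.2) (fun i => Ys i.1 i.2) =
      ∑ b, bicliqueCost (Xs b) (Ys b) :=
  Fintype.sum_sigma _

end Cost

section Decomposition

variable {ι X Y : Type*} [DecidableEq X] [DecidableEq Y]

def IsBicliqueDecomposition [Fintype ι] (Xs : ι → Finset X) (Ys : ι → Finset Y)
    (E : Finset (X × Y)) : Prop :=
  Pairwise (fun i j => Disjoint (Xs i ×ˢ Ys i) (Xs j ×ˢ Ys j)) ∧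
    univ.biUnion (fun i => Xs i ×ˢ Ys i) = E

namespace IsBicliqueDecomposition

variable [Fintype ι] {Xs : ι → Finset X} {Ys : ι → Finset Y} {E : Finset (X × Y)}

theorem product_subset (h : IsBicliqueDecomposition Xs Ys E) (i : ι) : Xs i ×ˢ Ys i ⊆ E :=
  h.2 ▸ subset_biUnion_of_mem (fun i => Xs i ×ˢ Ys i) (mem_univ i)

theorem comp_equiv {κ : Type*} [Fintype κ] (h : IsBicliqueDecomposition Xs Ys E) (e : κ ≃ ι) :
    IsBicliqueDecomposition (Xs ∘ e) (Ys ∘ e) E := by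
  refine ⟨fun i j hij => h.1 (e.injective.ne hij), ?_⟩
  ext p
  simp only [← h.2, mem_biUnion, mem_univ, true_and, comp_apply, e.surjective.exists]

theorem exists_fin (h : IsBicliqueDecomposition Xs Ys E) :
    ∃ (q : ℕ) (Xs' : Fin q → Finset X) (Ys' : Fin q → Finset Y),
      IsBicliqueDecomposition Xs' Ys' E ∧ bicliqueCost Xs' Ys' = bicliqueCost Xs Ys :=
  ⟨_, _, _, h.comp_equiv (Fintype.equivFin ι).symm, bicliqueCost_comp_equiv _ _ _⟩

theorem sigma {β : Type*} [Fintype β] {κ : β → Type*} [∀ b, Fintype (κ b)]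
    {Xs : ∀ b, κ b → Finset X} {Ys : ∀ b, κ b → Finset Y} {E : β → Finset (X × Y)}
    (h : ∀ b, IsBicliqueDecomposition (Xs b) (Ys b) (E b)) (hE : Pairwise (Disjoint on E)) :
    IsBicliqueDecomposition (fun i : Σ b, κ b => Xs i.1 i.2) (fun i => Ys i.1 i.2)
      (univ.biUnion E) := by
  refine ⟨?_, ?_⟩
  · rintro ⟨b, s⟩ ⟨c, t⟩ hne
    by_cases hbc : b = c
    · subst hbc
      exact (h b).1 fun hst => hne (congrArg _ hst)
    · exact (hE hbc).mono ((h b).product_subset s) ((h c).product_subset t)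
  · ext p
    simp only [mem_biUnion, mem_univ, true_and, Sigma.exists, ← (h _).2]

end IsBicliqueDecomposition

end Decomposition

section Trace

variable {X Y : Type*} [Fintype X] [DecidableEq X] [DecidableEq Y]

def neighborTrace (E : Finset (X × Y)) (B : Finset Y) (x : X) : Finset Y :=
  {y ∈ B | (x, y) ∈ E}

def traceClass (E : Finset (X × Y)) (B T : Finset Y) : Finset X :=
  {x | neighborTrace E B x = T}

theorem isBicliqueDecomposition_traceClass (E : Finset (X × Y)) (B : Finset Y) :
    IsBicliqueDecomposition (fun T : B.powerset => traceClass E B T) (fun T => (T : Finset Y))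
      {p ∈ E | p.2 ∈ B} := by
  refine ⟨fun S T hST => disjoint_product.2 (Or.inl ?_), ?_⟩
  · refine disjoint_left.2 fun x hS hT => hST (Subtype.ext ?_)
    simp only [traceClass, mem_filter, mem_univ, true_and] at hS hT
    rw [← hS, ← hT]
  · ext ⟨x, y⟩
    simp only [traceClass, mem_biUnion, mem_product, mem_filter, mem_univ,
      true_and, Subtype.exists, mem_powerset]
    constructor
    · rintro ⟨T, -, rfl, hy⟩
      exact (mem_filter.1 hy).symm
    · intro hxy
      exact ⟨_, filter_subset _ _, rfl, mem_filter.2 hxy.symm⟩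

theorem bicliqueCost_traceClass_le (E : Finset (X × Y)) (B : Finset Y) :
    bicliqueCost (fun T : B.powerset => traceClass E B T) (fun T => (T : Finset Y)) ≤
      Fintype.card X + 2 ^ #B * #B := by
  have hX : ∑ T ∈ B.powerset, #(traceClass E B T) = Fintype.card X :=
    (card_eq_sum_card_fiberwise fun x _ => mem_powerset.2 (filter_subset _ B)).symm
  have hY : ∑ T ∈ B.powerset, #T ≤ 2 ^ #B * #B := by
    simpa [card_powerset] using sum_le_card_nsmul _ _ _ fun T hT => card_le_card (mem_powerset.1 hT)
  simp only [bicliqueCost, sum_add_distrib, sum_coe_sort B.powerset (fun T => #(traceClass E B T)),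
    sum_coe_sort B.powerset card]
  omega

end Trace

section Blocks

variable {X Y : Type*} [Fintype X] [Fintype Y] [DecidableEq X] [DecidableEq Y]

theorem exists_isBicliqueDecomposition_of_blocks {β : Type*} [Fintype β] [DecidableEq β]
    (f : Y → β) {k : ℕ} (hf : ∀ b, #{y | f y = b} ≤ k) (E : Finset (X × Y)) :
    ∃ (q : ℕ) (Xs : Fin q → Finset X) (Ys : Fin q → Finset Y),
      IsBicliqueDecomposition Xs Ys E ∧
        bicliqueCost Xs Ys ≤ Fintype.card β * (Fintype.card X + 2 ^ k * k) := by
  set B : β → Finset Y := fun b => {y | f y = b}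
  have hunion : univ.biUnion (fun b => {p ∈ E | p.2 ∈ B b}) = E := by
    ext p
    simp [B]
  have hdisj : Pairwise (Disjoint on fun b => {p ∈ E | p.2 ∈ B b}) := fun b c hbc =>
    disjoint_filter.2 fun p _ hb hc => hbc <| by simp_all [B]
  have hdec := IsBicliqueDecomposition.sigma (fun b => isBicliqueDecomposition_traceClass E (B b))
    hdisj
  rw [hunion] at hdec
  obtain ⟨q, Xs, Ys, hdec', hcost⟩ := hdec.exists_fin
  refine ⟨q, Xs, Ys, hdec', ?_⟩
  rw [hcost, bicliqueCost_sigma (fun b (T : (B b).powerset) => traceClass E (B b) T)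
    (fun _ T => (T : Finset Y)), ← smul_eq_mul, ← card_univ]
  refine sum_le_card_nsmul _ _ _ fun b _ => (bicliqueCost_traceClass_le E (B b)).trans ?_
  have hb := hf b
  gcongr
  exact one_le_two

theorem card_filter_div_eq_le {α : Type*} (s : Finset α) {g : α → ℕ} (hg : Set.InjOn g s)
    {k : ℕ} (hk : 0 < k) (b : ℕ) : #{a ∈ s | g a / k = b} ≤ k := by
  simpa using card_le_card_of_injOn (t := range k) (fun a => g a % k)
    (fun a _ => mem_range.2 (Nat.mod_lt _ hk)) fun a ha a' ha' hmod => by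
      simp only [coe_filter, Set.mem_ofPred_eq] at ha ha'
      refine hg ha.1 ha'.1 ?_
      rw [← Nat.div_add_mod (g a) k, ← Nat.div_add_mod (g a') k, ha.2, ha'.2]
      exact congrArg (k * b + ·) hmod

theorem exists_isBicliqueDecomposition_cost_le {k : ℕ} (hk : 0 < k) (E : Finset (X × Y)) :
    ∃ (q : ℕ) (Xs : Fin q → Finset X) (Ys : Fin q → Finset Y),
      IsBicliqueDecomposition Xs Ys E ∧
        bicliqueCost Xs Ys ≤ (Fintype.card Y / k + 1) * (Fintype.card X + 2 ^ k * k) := by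
  let e := Fintype.equivFin Y
  have hblock (y : Y) : (e y : ℕ) / k < Fintype.card Y / k + 1 :=
    Nat.lt_succ_of_le (Nat.div_le_div_right (e y).isLt.le)
  have hfiber (b : Fin (Fintype.card Y / k + 1)) : #{y | (⟨_, hblock y⟩ : Fin _) = b} ≤ k := by
    simpa [Fin.ext_iff] using
      card_filter_div_eq_le univ (fun y _ y' _ h => e.injective (Fin.ext h)) hk b
  simpa using exists_isBicliqueDecomposition_of_blocks _ hfiber E

end Blocks

section Estimates

theorem one_le_log_four : 1 ≤ Real.log 4 := by
  have := Real.log_two_gt_d9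
  rw [show (4 : ℝ) = 2 ^ 2 by norm_num, Real.log_pow]
  push_cast
  linarith

theorem log_four_lt : Real.log 4 < 1.4 := by
  have := Real.log_two_lt_d9
  rw [show (4 : ℝ) = 2 ^ 2 by norm_num, Real.log_pow]
  push_cast
  linarith

theorem natLog_four_le_log {m : ℕ} (hm : m ≠ 0) : (Nat.log 4 m : ℝ) ≤ Real.log m := by
  have hpow : (4 : ℝ) ^ Nat.log 4 m ≤ m := by exact_mod_cast Nat.pow_log_le_self 4 hm
  calc (Nat.log 4 m : ℝ) ≤ Nat.log 4 m * Real.log 4 :=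
        le_mul_of_one_le_right (Nat.cast_nonneg _) one_le_log_four
    _ = Real.log (4 ^ Nat.log 4 m) := (Real.log_pow _ _).symm
    _ ≤ Real.log m := Real.log_le_log (by positivity) hpow

theorem log_le_two_mul_natLog_four {m : ℕ} (hm : 4 ^ 3 ≤ m) :
    Real.log m ≤ 2 * Nat.log 4 m := by
  have hk : (3 : ℝ) ≤ Nat.log 4 m := by exact_mod_cast Nat.le_log_of_pow_le (by norm_num) hm
  have hlt : (m : ℝ) < 4 ^ (Nat.log 4 m + 1) := by
    exact_mod_cast Nat.lt_pow_succ_log_self (by norm_num) m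
  have hm0 : (0 : ℝ) < m := by exact_mod_cast (by omega : 0 < m)
  calc Real.log m ≤ Real.log (4 ^ (Nat.log 4 m + 1)) := Real.log_le_log hm0 hlt.le
    _ = (Nat.log 4 m + 1) * Real.log 4 := by rw [Real.log_pow]; push_cast; ring
    _ ≤ 2 * Nat.log 4 m := by nlinarith [log_four_lt]

theorem six_mul_le_two_pow {k : ℕ} (hk : 5 ≤ k) : 6 * k ≤ 2 ^ k := by
  induction k, hk using Nat.le_induction with
  | base => norm_num
  | succ k hk ih =>
    have : 6 ≤ 2 ^ k := le_trans (by norm_num) (Nat.pow_le_pow_right two_pos hk)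
    rw [pow_succ]
    omega

theorem three_mul_log_mul_two_pow_natLog_four_le {m : ℕ} (hm : 4 ^ 5 ≤ m) :
    3 * Real.log m * 2 ^ Nat.log 4 m ≤ m := by
  set k := Nat.log 4 m
  have hk : 5 ≤ k := Nat.le_log_of_pow_le (by norm_num) hm
  have h6k : (6 * k : ℝ) ≤ 2 ^ k := by exact_mod_cast six_mul_le_two_pow hk
  have hpow : (4 : ℝ) ^ k ≤ m := by exact_mod_cast Nat.pow_log_le_self 4 (by omega)
  calc 3 * Real.log m * 2 ^ k ≤ 3 * (2 * k) * 2 ^ k := by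
        gcongr; exact log_le_two_mul_natLog_four (le_trans (by norm_num) hm)
    _ = 6 * k * 2 ^ k := by ring
    _ ≤ 2 ^ k * 2 ^ k := by gcongr
    _ = 4 ^ k := by rw [← mul_pow]; norm_num
    _ ≤ m := hpow

theorem div_add_one_mul_add_mul_le {m n k L p : ℝ} (hm : 0 ≤ m) (hk : 0 < k)
    (hL : 0 < L) (hLk : L ≤ 2 * k) (hpm : 3 * L * p ≤ m) (hLn : 3 * L ≤ n) (hkn : k ≤ n) :
    (n / k + 1) * (m + p * k) ≤ 3 * m * n / L := by
  have hn : 0 ≤ n := hk.le.trans hkn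
  have hmn : m * n / k ≤ 2 * (m * n) / L := by
    rw [div_le_div_iff₀ hk hL]
    nlinarith [mul_nonneg hm hn]
  have hpn : p * n ≤ m * n / (3 * L) := by
    rw [le_div_iff₀ (by positivity)]
    nlinarith
  have hmL : m ≤ m * n / (3 * L) := by
    rw [le_div_iff₀ (by positivity)]
    nlinarith
  have hpk : p * k ≤ m * n / (3 * L) := by
    rw [le_div_iff₀ (by positivity)]
    nlinarith [mul_nonneg hm hk.le]
  calc (n / k + 1) * (m + p * k) = m * n / k + p * n + m + p * k := by
        field_simp
        ring
    _ ≤ 2 * (m * n) / L + 3 * (m * n / (3 * L)) := by linarith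
    _ = 3 * m * n / L := by field_simp; ring

end Estimates

/-- Tuza's theorem: there is a threshold `n₀` such that for all `m ≥ n ≥ n₀` with
`n ≥ 10 (ln m)²`, every bipartite graph with parts of size `m` and `n` has a biclique
decomposition `(X₁,Y₁), …, (X_q,Y_q)` with `∑ᵢ(|Xᵢ| + |Yᵢ|) ≤ 3mn / ln m`. -/
theorem tuza_biclique_decomposition :
    ∃ n₀ : ℕ, ∀ m n : ℕ, n₀ ≤ n → n ≤ m →
      (10 : ℝ) * Real.log m ^ 2 ≤ n →
      ∀ (X Y : Type) (_ : Fintype X) (_ : Fintype Y) (_ : DecidableEq X) (_ : DecidableEq Y),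
        Fintype.card X = m → Fintype.card Y = n →
        ∀ E : Finset (X × Y),
          ∃ (q : ℕ) (Xs : Fin q → Finset X) (Ys : Fin q → Finset Y),
            (∀ i j, i ≠ j → Disjoint (Xs i ×ˢ Ys i) (Xs j ×ˢ Ys j)) ∧
            Finset.univ.biUnion (fun i => Xs i ×ˢ Ys i) = E ∧
            ((∑ i, ((Xs i).card + (Ys i).card) : ℕ) : ℝ) ≤ 3 * m * n / Real.log m := by
  refine ⟨4 ^ 5, fun m n hn₀ hnm hlog X Y _ _ _ _ hX hY E => ?_⟩
  have hm : 4 ^ 5 ≤ m := hn₀.trans hnm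
  set k := Nat.log 4 m
  have hk : 5 ≤ k := Nat.le_log_of_pow_le (by norm_num) hm
  have hkR : (5 : ℝ) ≤ k := by exact_mod_cast hk
  have hkL : (k : ℝ) ≤ Real.log m := natLog_four_le_log (by omega)
  have hLn : 3 * Real.log m ≤ n := by nlinarith
  obtain ⟨q, Xs, Ys, ⟨hdisj, hunion⟩, hcost⟩ :=
    exists_isBicliqueDecomposition_cost_le (k := k) (by omega) E
  refine ⟨q, Xs, Ys, fun _ _ hij => hdisj hij, hunion, ?_⟩
  rw [hX, hY] at hcost
  calc ((bicliqueCost Xs Ys : ℕ) : ℝ) ≤ ((n / k : ℕ) + 1) * (m + 2 ^ k * k) := by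
        exact_mod_cast hcost
    _ ≤ (n / k + 1) * (m + 2 ^ k * k) := by gcongr; exact Nat.cast_div_le
    _ ≤ 3 * m * n / Real.log m :=
      div_add_one_mul_add_mul_le (by positivity) (by positivity) (by linarith)
        (log_le_two_mul_natLog_four (le_trans (by norm_num) hm))
        (three_mul_log_mul_two_pow_natLog_four_le hm) hLn (by linarith)
end

section
/- For every ε > 0 there exists n₀ such that for all n ≥ n₀ the following holds: every simple graph G on a vertex set V of size n admits a family of bicliques (X₁,Y₁), …, (X_q,Y_q) — where Xᵢ, Yᵢ ⊆ V are disjoint nonempty sets such that every pair {x,y} with x ∈ Xᵢ, y ∈ Yᵢ is an edge of G — whose edge sets {{x,y} : x ∈ Xᵢ, y ∈ Yᵢ} are pairwise disjoint and have union equal to the edge set of G, and which satisfies Σᵢ(|Xᵢ| + |Yᵢ|) ≤ (1+ε)·n²/(2·ln n). -/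
/-!
Label the vertices `0, …, n-1`, cut the labels into blocks `Bᵢ` of `k = ⌈ln n⌉` consecutive
ones, and orient each edge from the smaller label to the larger. An edge inside a block is its
own biclique. An edge `xy` with `x ∈ Bᵢ` and `y` in a later block lies in the biclique
`(N(y) ∩ Bᵢ, {y' beyond Bᵢ | N(y') ∩ Bᵢ = N(y) ∩ Bᵢ})`. These bicliques are indexed by the
subsets of `Bᵢ`, so block `i` contributes at most `k 2^k` on the left, while every vertex beyond
`Bᵢ` lies on exactly one right side. The right sides therefore total
`∑ᵥ ⌊label v / k⌋ ≤ n² / (2k) ≤ n² / (2 ln n)`, and the rest of the cost,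
`n k 2^k + 2nk = n^(1 + ln 2 + o(1))`, is `o(n² / ln n)`.
-/

open Finset Filter Real

namespace Finset

variable {α ι M : Type*} [DecidableEq ι] [AddCommMonoid M] [PartialOrder M]
  [CanonicallyOrderedAdd M]

theorem sum_union_le_add (s t : Finset ι) (w : ι → M) :
    ∑ i ∈ s ∪ t, w i ≤ ∑ i ∈ s, w i + ∑ i ∈ t, w i :=
  le_self_add.trans_eq (sum_union_inter)

theorem sum_biUnion_le (s : Finset α) (t : α → Finset ι) (w : ι → M) :
    ∑ i ∈ s.biUnion t, w i ≤ ∑ a ∈ s, ∑ i ∈ t a, w i := by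
  classical
  induction s using Finset.induction_on with
  | empty => simp
  | insert a s ha ih =>
    rw [biUnion_insert, sum_insert ha]
    exact (sum_union_le_add _ _ _).trans (by gcongr)

end Finset

namespace SimpleGraph

variable {V : Type*} [DecidableEq V] (G : SimpleGraph V)

def bicliqueEdges (p : Finset V × Finset V) : Finset (Sym2 V) :=
  (p.1 ×ˢ p.2).image fun e => s(e.1, e.2)

structure IsBicliqueDecomposition [Fintype G.edgeSet] (P : Finset (Finset V × Finset V)) :
    Prop where
  nonempty_fst : ∀ p ∈ P, p.1.Nonempty
  nonempty_snd : ∀ p ∈ P, p.2.Nonempty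
  disjoint : ∀ p ∈ P, Disjoint p.1 p.2
  adj : ∀ p ∈ P, ∀ x ∈ p.1, ∀ y ∈ p.2, G.Adj x y
  pairwiseDisjoint : (P : Set (Finset V × Finset V)).PairwiseDisjoint bicliqueEdges
  biUnion_eq : P.biUnion bicliqueEdges = G.edgeFinset

theorem IsBicliqueDecomposition.exists_fin [Fintype G.edgeSet] {P : Finset (Finset V × Finset V)}
    (hP : G.IsBicliqueDecomposition P) :
    ∃ (q : ℕ) (Xs Ys : Fin q → Finset V),
      (∀ i, (Xs i).Nonempty ∧ (Ys i).Nonempty ∧ Disjoint (Xs i) (Ys i) ∧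
        ∀ x ∈ Xs i, ∀ y ∈ Ys i, G.Adj x y) ∧
      (∀ i j, i ≠ j →
        Disjoint ((Xs i ×ˢ Ys i).image fun p => s(p.1, p.2))
          ((Xs j ×ˢ Ys j).image fun p => s(p.1, p.2))) ∧
      Finset.univ.biUnion (fun i => (Xs i ×ˢ Ys i).image fun p => s(p.1, p.2)) =
        G.edgeFinset ∧
      ∑ i, ((Xs i).card + (Ys i).card) = ∑ p ∈ P, (p.1.card + p.2.card) := by
  let b : Fin #P → Finset V × Finset V := fun i => P.equivFin.symm i
  have hb : ∀ i, b i ∈ P := fun i => (P.equivFin.symm i).2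
  refine ⟨#P, fun i => (b i).1, fun i => (b i).2,
    fun i => ⟨hP.nonempty_fst _ (hb i), hP.nonempty_snd _ (hb i), hP.disjoint _ (hb i),
      hP.adj _ (hb i)⟩,
    fun i j hij => hP.pairwiseDisjoint (hb i) (hb j) ?_, ?_, ?_⟩
  · exact fun h => hij (P.equivFin.symm.injective (Subtype.ext h))
  · rw [← hP.biUnion_eq]
    ext e
    simp only [mem_biUnion, mem_univ, true_and]
    constructor
    · rintro ⟨i, hi⟩
      exact ⟨b i, hb i, hi⟩
    · rintro ⟨p, hp, he⟩
      exact ⟨P.equivFin ⟨p, hp⟩, by simpa [b, bicliqueEdges] using he⟩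
  · rw [← sum_coe_sort P]
    exact Equiv.sum_comp P.equivFin.symm fun p : P => #p.1.1 + #p.1.2

def orientedEdges [Fintype V] [DecidableRel G.Adj] {α : Type*} [LinearOrder α] (f : V → α) :
    Finset (V × V) :=
  {e | G.Adj e.1 e.2 ∧ f e.1 < f e.2}

theorem isBicliqueDecomposition_image_of_canonical [Fintype V] [DecidableRel G.Adj]
    {α : Type*} [LinearOrder α] {f : V → α} (hf : Function.Injective f)
    (D : V → V → Finset V × Finset V)
    (hmem : ∀ ⦃x y⦄, G.Adj x y → f x < f y → x ∈ (D x y).1 ∧ y ∈ (D x y).2)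
    (hcanon : ∀ ⦃x y⦄, G.Adj x y → f x < f y → ∀ a ∈ (D x y).1, ∀ b ∈ (D x y).2,
      G.Adj a b ∧ f a < f b ∧ D a b = D x y) :
    G.IsBicliqueDecomposition
      ((G.orientedEdges f).image fun e => D e.1 e.2) := by
  have hP : ∀ {p}, p ∈ (G.orientedEdges f).image (fun e => D e.1 e.2) ↔
      ∃ x y, G.Adj x y ∧ f x < f y ∧ D x y = p := by
    simp [orientedEdges, and_assoc]
  have hedge : ∀ {p e}, p ∈ (G.orientedEdges f).image (fun e => D e.1 e.2) →
      e ∈ bicliqueEdges p →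
      ∃ a b, G.Adj a b ∧ f a < f b ∧ D a b = p ∧ e = s(a, b) := by
    intro p e hp he
    obtain ⟨x, y, hxy, hfxy, rfl⟩ := hP.1 hp
    obtain ⟨⟨a, b⟩, hab, rfl⟩ := mem_image.1 he
    obtain ⟨ha, hb⟩ := mem_product.1 hab
    obtain ⟨hadj, hlt, hD⟩ := hcanon hxy hfxy a ha b hb
    exact ⟨a, b, hadj, hlt, hD, rfl⟩
  refine ⟨?_, ?_, ?_, ?_, ?_, ?_⟩
  · intro p hp
    obtain ⟨x, y, hxy, hfxy, rfl⟩ := hP.1 hp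
    exact ⟨x, (hmem hxy hfxy).1⟩
  · intro p hp
    obtain ⟨x, y, hxy, hfxy, rfl⟩ := hP.1 hp
    exact ⟨y, (hmem hxy hfxy).2⟩
  · intro p hp
    obtain ⟨x, y, hxy, hfxy, rfl⟩ := hP.1 hp
    exact Finset.disjoint_left.2 fun v hv₁ hv₂ => (hcanon hxy hfxy v hv₁ v hv₂).2.1.false
  · intro p hp
    obtain ⟨x, y, hxy, hfxy, rfl⟩ := hP.1 hp
    exact fun a ha b hb => (hcanon hxy hfxy a ha b hb).1
  · intro p hp p' hp' hne
    refine Finset.disjoint_left.2 fun e he he' => hne ?_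
    obtain ⟨a, b, -, hab, rfl, rfl⟩ := hedge hp he
    obtain ⟨a', b', -, hab', rfl, he⟩ := hedge hp' he'
    rcases Sym2.eq_iff.1 he with ⟨rfl, rfl⟩ | ⟨rfl, rfl⟩
    · rfl
    · exact (hab.asymm hab').elim
  · ext e
    constructor
    · intro he
      obtain ⟨p, hp, he⟩ := mem_biUnion.1 he
      obtain ⟨a, b, hadj, -, -, rfl⟩ := hedge hp he
      exact mem_edgeFinset.2 hadj
    · induction e with
      | h x y =>
        intro he
        have hxy : G.Adj x y := mem_edgeFinset.1 he
        rcases lt_or_gt_of_ne (hf.ne hxy.ne) with hlt | hlt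
        · refine mem_biUnion.2 ⟨D x y, hP.2 ⟨x, y, hxy, hlt, rfl⟩, ?_⟩
          exact mem_image.2 ⟨(x, y), mem_product.2 (hmem hxy hlt), rfl⟩
        · refine mem_biUnion.2 ⟨D y x, hP.2 ⟨y, x, hxy.symm, hlt, rfl⟩, ?_⟩
          exact mem_image.2 ⟨(y, x), mem_product.2 (hmem hxy.symm hlt), Sym2.eq_swap⟩

end SimpleGraph

namespace ChungErdosSpencer

open SimpleGraph

-- `x²/(2k)` pays for the right sides, `x k 2^k` for the left sides, `2xk` for in-block edges.
noncomputable def blockCost (x : ℝ) (k : ℕ) : ℝ := x ^ 2 / (2 * k) + x * k * (2 ^ k + 2)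

theorem two_mul_mul_sum_div_le {V : Type*} [Fintype V] {n : ℕ} (e : V ≃ Fin n) (k : ℕ) :
    2 * k * ∑ v, (e v : ℕ) / k ≤ n ^ 2 := by
  calc 2 * k * ∑ v, (e v : ℕ) / k = 2 * ∑ v, (e v : ℕ) / k * k := by rw [← sum_mul]; ring
    _ ≤ 2 * ∑ v, (e v : ℕ) := by gcongr; exact Nat.div_mul_le_self _ _
    _ = (∑ j ∈ range n, j) * 2 := by
        rw [Equiv.sum_comp e (fun j : Fin n => (j : ℕ)), Fin.sum_univ_eq_sum_range (fun j => j),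
          mul_comm]
    _ = n * (n - 1) := sum_range_id_mul_two n
    _ ≤ n ^ 2 := by rw [sq]; exact Nat.mul_le_mul_left _ (Nat.sub_le _ _)

variable {V : Type*} [Fintype V] (G : SimpleGraph V) [DecidableRel G.Adj] (f : V → ℕ) (k : ℕ)

def block (i : ℕ) : Finset V := {v | f v / k = i}

def above (i : ℕ) : Finset V := {v | i < f v / k}

variable {f k}

@[simp] theorem mem_block {i : ℕ} {v : V} : v ∈ block f k i ↔ f v / k = i := by simp [block]

@[simp] theorem mem_above {i : ℕ} {v : V} : v ∈ above f k i ↔ i < f v / k := by simp [above]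

theorem card_block_le (hf : Function.Injective f) (hk : 0 < k) (i : ℕ) :
    #(block f k i) ≤ k := by
  have hmaps : Set.MapsTo f (block f k i) (Ico (i * k) (i * k + k)) := by
    intro v hv
    rw [mem_coe, mem_block] at hv
    subst hv
    exact mem_Ico.2 ⟨Nat.div_mul_le_self _ _, Nat.lt_div_mul_add hk⟩
  simpa using card_le_card_of_injOn f hmaps hf.injOn

theorem sum_card_above {n : ℕ} (hfn : ∀ v, f v < n) :
    ∑ i ∈ range n, #(above f k i) = ∑ v, f v / k := by
  simp only [card_eq_sum_ones]
  refine (sum_comm' (t' := univ) (s' := fun v => range (f v / k)) fun i v => ?_).trans ?_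
  · have := (Nat.div_le_self (f v) k).trans_lt (hfn v)
    simp only [mem_range, mem_above, mem_univ, and_true]
    omega
  · simp

theorem sum_card_powerset_block_le (hf : Function.Injective f) (hk : 0 < k) (i : ℕ) :
    ∑ s ∈ (block f k i).powerset, #s ≤ 2 ^ k * k := by
  have hle := card_block_le hf hk i
  calc ∑ s ∈ (block f k i).powerset, #s
      ≤ #(block f k i).powerset * #(block f k i) :=
        sum_le_card_nsmul _ _ _ fun s hs => card_le_card (mem_powerset.1 hs)
    _ ≤ 2 ^ k * k := by
        rw [card_powerset]
        exact Nat.mul_le_mul (Nat.pow_le_pow_right two_pos hle) hle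

variable (f k) [DecidableEq V]

def blockNbhd (i : ℕ) (y : V) : Finset V := G.neighborFinset y ∩ block f k i

def nbhdClass (i : ℕ) (s : Finset V) : Finset V := {y ∈ above f k i | blockNbhd G f k i y = s}

def canonicalBiclique (x y : V) : Finset V × Finset V :=
  if f x / k = f y / k then ({x}, {y})
  else (blockNbhd G f k (f x / k) y, nbhdClass G f k (f x / k) (blockNbhd G f k (f x / k) y))

def crossBicliques (n : ℕ) : Finset (Finset V × Finset V) :=
  (range n).biUnion fun i => (block f k i).powerset.image fun s => (s, nbhdClass G f k i s)

def pairBicliques : Finset (Finset V × Finset V) :=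
  univ.biUnion fun y => (block f k (f y / k)).image fun x => ({x}, {y})

variable {G f k}

theorem mem_blockNbhd {i : ℕ} {x y : V} :
    x ∈ blockNbhd G f k i y ↔ G.Adj x y ∧ f x / k = i := by
  simp [blockNbhd, adj_comm]

theorem mem_nbhdClass {i : ℕ} {s : Finset V} {y : V} :
    y ∈ nbhdClass G f k i s ↔ i < f y / k ∧ blockNbhd G f k i y = s := by
  simp [nbhdClass]

theorem mem_canonicalBiclique {x y : V} (hxy : G.Adj x y) (hlt : f x < f y) :
    x ∈ (canonicalBiclique G f k x y).1 ∧ y ∈ (canonicalBiclique G f k x y).2 := by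
  unfold canonicalBiclique
  split_ifs with h
  · simp
  · have : f x / k < f y / k := (Nat.div_le_div_right hlt.le).lt_of_ne h
    exact ⟨mem_blockNbhd.2 ⟨hxy, rfl⟩, mem_nbhdClass.2 ⟨this, rfl⟩⟩

theorem canonicalBiclique_eq_of_mem {x y : V} (hxy : G.Adj x y) (hlt : f x < f y)
    {a b : V} (ha : a ∈ (canonicalBiclique G f k x y).1)
    (hb : b ∈ (canonicalBiclique G f k x y).2) :
    G.Adj a b ∧ f a < f b ∧ canonicalBiclique G f k a b = canonicalBiclique G f k x y := by
  unfold canonicalBiclique at ha hb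
  split_ifs at ha hb with h
  · rw [mem_singleton] at ha hb
    subst ha hb
    exact ⟨hxy, hlt, rfl⟩
  · obtain ⟨hib, hnb⟩ := mem_nbhdClass.1 hb
    obtain ⟨hab, hai⟩ := mem_blockNbhd.1 (hnb ▸ ha)
    have hfab : f a < f b := by
      by_contra! hba
      exact absurd (Nat.div_le_div_right (c := k) hba) (by omega)
    refine ⟨hab, hfab, ?_⟩
    rw [canonicalBiclique, canonicalBiclique, hai, if_neg (by omega : ¬f x / k = f b / k),
      if_neg h, hnb]

theorem canonicalBiclique_mem {n : ℕ} {x : V} (hx : f x < n) (y : V) :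
    canonicalBiclique G f k x y ∈ crossBicliques G f k n ∪ pairBicliques f k := by
  unfold canonicalBiclique
  split_ifs with h
  · refine mem_union_right _ (mem_biUnion.2 ⟨y, mem_univ _, mem_image.2 ⟨x, ?_, rfl⟩⟩)
    exact mem_block.2 h
  · refine mem_union_left _ (mem_biUnion.2 ⟨f x / k, ?_, mem_image.2 ⟨_, ?_, rfl⟩⟩)
    · exact mem_range.2 ((Nat.div_le_self _ _).trans_lt hx)
    · exact mem_powerset.2 inter_subset_right

theorem sum_card_nbhdClass (i : ℕ) :
    ∑ s ∈ (block f k i).powerset, #(nbhdClass G f k i s) = #(above f k i) :=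
  (card_eq_sum_card_fiberwise fun _ _ => mem_powerset.2 inter_subset_right).symm

theorem sum_crossBicliques_le (hf : Function.Injective f) (hk : 0 < k) {n : ℕ}
    (hfn : ∀ v, f v < n) :
    ∑ p ∈ crossBicliques G f k n, (#p.1 + #p.2) ≤ n * (2 ^ k * k) + ∑ v, f v / k := by
  calc ∑ p ∈ crossBicliques G f k n, (#p.1 + #p.2)
      ≤ ∑ i ∈ range n, ∑ s ∈ (block f k i).powerset, (#s + #(nbhdClass G f k i s)) := by
        refine (sum_biUnion_le _ _ _).trans (sum_le_sum fun i _ => ?_)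
        exact sum_image_le_of_nonneg fun _ _ => Nat.zero_le _
    _ = ∑ i ∈ range n, (∑ s ∈ (block f k i).powerset, #s + #(above f k i)) := by
        simp only [sum_add_distrib, sum_card_nbhdClass]
    _ ≤ ∑ i ∈ range n, (2 ^ k * k + #(above f k i)) := by
        gcongr with i
        exact sum_card_powerset_block_le hf hk i
    _ = n * (2 ^ k * k) + ∑ v, f v / k := by
        rw [sum_add_distrib, sum_const, card_range, smul_eq_mul, sum_card_above hfn]

theorem sum_pairBicliques_le (hf : Function.Injective f) (hk : 0 < k) :
    ∑ p ∈ pairBicliques f k, (#p.1 + #p.2) ≤ 2 * (k * Fintype.card V) := by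
  calc ∑ p ∈ pairBicliques f k, (#p.1 + #p.2)
      ≤ ∑ y : V, ∑ x ∈ block f k (f y / k), (#{x} + #{y}) := by
        refine (sum_biUnion_le _ _ _).trans (sum_le_sum fun y _ => ?_)
        exact sum_image_le_of_nonneg fun _ _ => Nat.zero_le _
    _ = ∑ y : V, 2 * #(block f k (f y / k)) := by simp [mul_comm]
    _ ≤ ∑ _y : V, 2 * k := by
        gcongr with y
        exact card_block_le hf hk _
    _ = 2 * (k * Fintype.card V) := by rw [sum_const, card_univ, smul_eq_mul]; ring

theorem exists_isBicliqueDecomposition_sum_le (hf : Function.Injective f) (hk : 0 < k) {n : ℕ}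
    (hfn : ∀ v, f v < n) :
    ∃ P, G.IsBicliqueDecomposition P ∧
      ∑ p ∈ P, (#p.1 + #p.2) ≤
        ∑ v, f v / k + n * (2 ^ k * k) + 2 * (k * Fintype.card V) := by
  refine ⟨_, G.isBicliqueDecomposition_image_of_canonical hf (canonicalBiclique G f k)
    (fun _ _ => mem_canonicalBiclique)
    (fun _ _ hxy hlt _ ha _ hb => canonicalBiclique_eq_of_mem hxy hlt ha hb), ?_⟩
  have hsub : (G.orientedEdges f).image (fun e => canonicalBiclique G f k e.1 e.2) ⊆
      crossBicliques G f k n ∪ pairBicliques f k := by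
    intro p hp
    obtain ⟨⟨x, y⟩, -, rfl⟩ := mem_image.1 hp
    exact canonicalBiclique_mem (hfn x) y
  calc _ ≤ ∑ p ∈ crossBicliques G f k n ∪ pairBicliques f k, (#p.1 + #p.2) :=
        sum_le_sum_of_subset hsub
    _ ≤ ∑ p ∈ crossBicliques G f k n, (#p.1 + #p.2) +
          ∑ p ∈ pairBicliques f k, (#p.1 + #p.2) :=
        sum_union_le_add _ _ _
    _ ≤ n * (2 ^ k * k) + ∑ v, f v / k + 2 * (k * Fintype.card V) :=
        add_le_add (sum_crossBicliques_le hf hk hfn) (sum_pairBicliques_le hf hk)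
    _ = _ := by ring

theorem exists_isBicliqueDecomposition_sum_le_blockCost {n : ℕ} (e : V ≃ Fin n) (hk : 0 < k) :
    ∃ P, G.IsBicliqueDecomposition P ∧
      ((∑ p ∈ P, (#p.1 + #p.2) : ℕ) : ℝ) ≤ blockCost n k := by
  obtain ⟨P, hP, hcost⟩ := exists_isBicliqueDecomposition_sum_le (G := G)
    (Fin.val_injective.comp e.injective) hk fun v => (e v).2
  refine ⟨P, hP, ?_⟩
  have hmain : ((∑ v, (e v : ℕ) / k : ℕ) : ℝ) ≤ n ^ 2 / (2 * k) := by
    rw [le_div_iff₀ (by positivity)]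
    exact_mod_cast (mul_comm _ _).le.trans (two_mul_mul_sum_div_le e k)
  have hcard : Fintype.card V = n := by simpa using Fintype.card_congr e
  calc ((∑ p ∈ P, (#p.1 + #p.2) : ℕ) : ℝ)
      ≤ ((∑ v, (e v : ℕ) / k : ℕ) : ℝ) + n * (2 ^ k * k) + 2 * (k * n) := by
        rw [hcard] at hcost; exact_mod_cast hcost
    _ ≤ blockCost n k := by rw [blockCost]; linarith

theorem two_pow_ceil_log_le {x : ℝ} (hx : 1 ≤ x) :
    (2 : ℝ) ^ ⌈log x⌉₊ ≤ 2 * (x ^ (1 / 4 : ℝ)) ^ 3 := by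
  have hL : 0 ≤ log x := log_nonneg hx
  calc (2 : ℝ) ^ ⌈log x⌉₊ = 2 ^ (⌈log x⌉₊ : ℝ) := (rpow_natCast 2 _).symm
    _ ≤ 2 ^ (log x + 1) := rpow_le_rpow_of_exponent_le one_le_two (Nat.ceil_lt_add_one hL).le
    _ = 2 * exp (log 2 * log x) := by
        rw [rpow_add two_pos, rpow_one, rpow_def_of_pos two_pos, mul_comm]
    _ ≤ 2 * exp (log x * (1 / 4 * 3)) := by
        gcongr 2 * ?_
        exact exp_le_exp.2 (by nlinarith [log_two_lt_d9])
    _ = 2 * (x ^ (1 / 4 : ℝ)) ^ 3 := by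
        rw [← rpow_natCast, ← rpow_mul (by linarith), rpow_def_of_pos (by linarith)]
        norm_num

theorem blockCost_ceil_log_le_of_log_sq_le {ε x : ℝ} (hx : 3 ≤ x)
    (h : 16 * log x ^ 2 ≤ ε * x ^ (1 / 4 : ℝ)) :
    blockCost x ⌈log x⌉₊ ≤ (1 + ε) * x ^ 2 / (2 * log x) := by
  rw [blockCost]
  set L := log x
  set k := ⌈L⌉₊
  set y := x ^ (1 / 4 : ℝ)
  have hL : 1 ≤ L := by
    rw [le_log_iff_exp_le (by linarith)]
    linarith [exp_one_lt_d9]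
  have hLk : L ≤ k := Nat.le_ceil L
  have hkL : (k : ℝ) ≤ 2 * L := by linarith [Nat.ceil_lt_add_one (by linarith : (0:ℝ) ≤ L)]
  have hy4 : y ^ 4 = x := by
    rw [← rpow_natCast, ← rpow_mul (by linarith)]
    norm_num
  have hy : 1 ≤ y := one_le_rpow (by linarith) (by norm_num)
  have h2k : (2 : ℝ) ^ k + 2 ≤ 4 * y ^ 3 := by
    have := two_pow_ceil_log_le (by linarith : 1 ≤ x)
    nlinarith [one_le_pow₀ (n := 3) hy]
  have hmain : x ^ 2 / (2 * k) ≤ x ^ 2 / (2 * L) := by gcongr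
  have herr : x * k * (2 ^ k + 2) ≤ ε * x ^ 2 / (2 * L) := by
    rw [le_div_iff₀ (by positivity)]
    calc x * k * (2 ^ k + 2) * (2 * L) ≤ x * (2 * L) * (4 * y ^ 3) * (2 * L) := by gcongr
      _ = y ^ 3 * x * (16 * L ^ 2) := by ring
      _ ≤ y ^ 3 * x * (ε * y) := by gcongr
      _ = ε * x ^ 2 := by rw [← hy4]; ring
  calc _ ≤ x ^ 2 / (2 * L) + ε * x ^ 2 / (2 * L) := add_le_add hmain herr
    _ = (1 + ε) * x ^ 2 / (2 * L) := by ring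

theorem eventually_blockCost_ceil_log_le {ε : ℝ} (hε : 0 < ε) :
    ∀ᶠ x : ℝ in atTop,
      0 < ⌈log x⌉₊ ∧ blockCost x ⌈log x⌉₊ ≤ (1 + ε) * x ^ 2 / (2 * log x) := by
  have hlo := (isLittleO_log_rpow_rpow_atTop 2 (by norm_num : (0 : ℝ) < 1 / 4)).bound
    (by positivity : 0 < ε / 16)
  filter_upwards [eventually_ge_atTop 3, hlo] with x hx hbound
  refine ⟨Nat.ceil_pos.2 (log_pos (by linarith)), blockCost_ceil_log_le_of_log_sq_le hx ?_⟩
  rw [norm_of_nonneg (rpow_nonneg (log_nonneg (by linarith)) _),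
    norm_of_nonneg (rpow_nonneg (by linarith) _), rpow_two] at hbound
  linarith

end ChungErdosSpencer

/-- The Chung–Erdős–Spencer theorem: for every `ε > 0` there is `n₀` such that every
simple graph on `n ≥ n₀` vertices has a biclique decomposition `(X₁,Y₁), …, (X_q,Y_q)`
with `∑ᵢ(|Xᵢ| + |Yᵢ|) ≤ (1+ε) n² / (2 ln n)`. -/
theorem chung_erdos_spencer (ε : ℝ) (hε : 0 < ε) :
    ∃ n₀ : ℕ, ∀ n : ℕ, n₀ ≤ n →
      ∀ (V : Type) (_ : Fintype V) (_ : DecidableEq V)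
        (G : SimpleGraph V) (_ : DecidableRel G.Adj),
        Fintype.card V = n →
        ∃ (q : ℕ) (Xs Ys : Fin q → Finset V),
          (∀ i, (Xs i).Nonempty ∧ (Ys i).Nonempty ∧ Disjoint (Xs i) (Ys i) ∧
            ∀ x ∈ Xs i, ∀ y ∈ Ys i, G.Adj x y) ∧
          (∀ i j, i ≠ j →
            Disjoint ((Xs i ×ˢ Ys i).image fun p => s(p.1, p.2))
              ((Xs j ×ˢ Ys j).image fun p => s(p.1, p.2))) ∧
          Finset.univ.biUnion (fun i => (Xs i ×ˢ Ys i).image fun p => s(p.1, p.2)) =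
            G.edgeFinset ∧
          ((∑ i, ((Xs i).card + (Ys i).card) : ℕ) : ℝ) ≤
            (1 + ε) * n ^ 2 / (2 * Real.log n) := by
  obtain ⟨n₀, hn₀⟩ := (tendsto_natCast_atTop_atTop.eventually
    (ChungErdosSpencer.eventually_blockCost_ceil_log_le hε)).exists_forall_of_atTop
  refine ⟨n₀, fun n hn V _ _ G _ hcard => ?_⟩
  obtain ⟨hk, hbound⟩ := hn₀ n hn
  obtain ⟨P, hP, hcost⟩ := ChungErdosSpencer.exists_isBicliqueDecomposition_sum_le_blockCost
    (G := G) (Fintype.equivFinOfCardEq hcard) hk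
  obtain ⟨q, Xs, Ys, hbic, hdisj, hunion, hsum⟩ := hP.exists_fin
  exact ⟨q, Xs, Ys, hbic, hdisj, hunion, hsum ▸ hcost.trans hbound⟩
end
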